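/- arXiv:1502.04169 — 6 statements merged into one kernel-verified Lean document; each statement's English description precedes it below -/
import Mathlib

section
/- In the noisy non-adaptive group testing model with the column statistic T(·) built with constant ψ ≥ 0, for every non-defective item j ∉ S_d the mean of T(j) equals μ_j = M·p·(Γ − ψ·(1−Γ)), and for every defective item i ∈ S_d the mean of T(i) equals μ_i = M·p·(γ0·Γ − ψ·(1−γ0·Γ)). -/
open MeasureTheory ProbabilityTheory

structure GTModel (Ω : Type) [MeasureSpace Ω] (M N : ℕ) (p u q : ℝ) where
  X : Fin M → Fin N → Ω → Bool
  d : Fin N → Fin M → Ω → Bool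
  w : Fin M → Ω → Bool
  measX : ∀ l i, Measurable (X l i)
  measd : ∀ i l, Measurable (d i l)
  measw : ∀ l, Measurable (w l)
  indep : iIndepFun
      (fun t : (Fin M × Fin N) ⊕ ((Fin N × Fin M) ⊕ Fin M) =>
        Sum.elim (fun li => X li.1 li.2)
          (Sum.elim (fun il => d il.1 il.2) (fun l => w l)) t)
      (ℙ : Measure Ω)
  probX : ∀ l i, (ℙ : Measure Ω) {ω | X l i ω = true} = ENNReal.ofReal p
  probd : ∀ i l, (ℙ : Measure Ω) {ω | d i l ω = true} = ENNReal.ofReal (1 - u)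
  probw : ∀ l, (ℙ : Measure Ω) {ω | w l ω = true} = ENNReal.ofReal q

noncomputable def GTModel.Y {Ω : Type} [MeasureSpace Ω] {M N : ℕ} {p u q : ℝ}
    (G : GTModel Ω M N p u q) (Sd : Finset (Fin N)) (l : Fin M) (ω : Ω) : Bool :=
  (Sd.sup fun i => G.d i l ω && G.X l i ω) || G.w l ω
/-- Column statistic: `T(i) = Σ_l X_{li}(1−Y_l) − ψ Σ_l X_{li} Y_l`. -/
noncomputable def GTModel.T {Ω : Type} [MeasureSpace Ω] {M N : ℕ} {p u q : ℝ}
    (G : GTModel Ω M N p u q) (Sd : Finset (Fin N)) (ψ : ℝ) (i : Fin N) (ω : Ω) : ℝ :=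
  (∑ l : Fin M, (if G.X l i ω then (1 : ℝ) else 0) * (if G.Y Sd l ω then 0 else 1))
    - ψ * ∑ l : Fin M, (if G.X l i ω then (1 : ℝ) else 0) * (if G.Y Sd l ω then 1 else 0)

/-!
Fix a test `l`. The event `{X_{li} = 1, Y_l = 0}` is the intersection of one event about the
noise `w(l)` and, for each item `j`, one event about the pair `(d_j(l), X_{lj})` alone
(`X_{lj} = 1` if `j = i`, and not `d_j(l) = X_{lj} = 1` if `j` is defective). These blocks of
coordinates are disjoint, so the events are independent, with probabilities `1 - q` and
`p`, `u p`, `1 - (1 - u) p` or `1`. Hence the event has probability `p Γ` for `i ∉ S_d` and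
`p γ0 Γ` for `i ∈ S_d`, and linearity of expectation applied to
`X_{li} (1 - Y_l) - ψ X_{li} Y_l = (1 + ψ) X_{li} (1 - Y_l) - ψ X_{li}` gives the means.
-/

open Function

namespace ProbabilityTheory

variable {Ω ι κ : Type*} {mΩ : MeasurableSpace Ω} {μ : Measure Ω}

theorem iIndep.iIndep_biSup {m : ι → MeasurableSpace Ω} (h_le : ∀ i, m i ≤ mΩ)
    (h : iIndep m μ) {J : κ → Set ι} (hJ : Pairwise (Disjoint on J)) :
    iIndep (fun k => ⨆ i ∈ J k, m i) μ := by
  have := h.isProbabilityMeasure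
  classical
  refine (iIndep_iff _ _).2 fun s => ?_
  induction s using Finset.induction_on with
  | empty => intro f _; simp
  | insert a s ha ih =>
    intro f hf
    have hdisj : Disjoint (J a) (⋃ k ∈ s, J k) :=
      Set.disjoint_iUnion₂_right.2 fun k hk => hJ fun hak => ha (hak ▸ hk)
    have hrest : MeasurableSet[⨆ i ∈ ⋃ k ∈ (s : Set κ), J k, m i] (⋂ k ∈ s, f k) :=
      MeasurableSet.biInter s.countable_toSet fun k hk =>
        (biSup_mono (Set.subset_biUnion_of_mem hk) : ⨆ i ∈ J k, m i ≤ _) _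
          (hf k (Finset.mem_insert_of_mem hk))
    rw [Finset.set_biInter_insert, Finset.prod_insert ha,
      (Indep_iff _ _ _).1 (indep_iSup_of_disjoint h_le h hdisj) _ _
        (hf a (Finset.mem_insert_self a s)) hrest,
      ih fun k hk => hf k (Finset.mem_insert_of_mem hk)]

theorem IndepFun.measureReal_setOf_bool [IsFiniteMeasure μ] {A B : Ω → Bool}
    (hA : Measurable A) (hB : Measurable B) (h : IndepFun A B μ)
    (φ : Bool → Bool → Prop) [∀ a b, Decidable (φ a b)] :
    μ.real {ω | φ (A ω) (B ω)}
      = ∑ a, ∑ b, if φ a b then μ.real {ω | A ω = a} * μ.real {ω | B ω = b} else 0 := by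
  set f : Ω → Bool × Bool := fun ω => (A ω, B ω)
  have hfiber (x : Bool × Bool) : f ⁻¹' {x} = A ⁻¹' {x.1} ∩ B ⁻¹' {x.2} := by
    ext ω; simp [f, Prod.ext_iff]
  have hset : {ω | φ (A ω) (B ω)}
      = f ⁻¹' ↑(Finset.univ.filter fun x : Bool × Bool => φ x.1 x.2) := by
    ext ω; simp [f]
  rw [hset, ← sum_measureReal_preimage_singleton _
    fun x _ => hfiber x ▸ (hA (.singleton _)).inter (hB (.singleton _)),
    Finset.sum_filter, ← Finset.univ_product_univ, Finset.sum_product]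
  refine Finset.sum_congr rfl fun a _ => Finset.sum_congr rfl fun b _ => ?_
  rw [hfiber, measureReal_def, h.measure_inter_preimage_eq_mul _ _ (.singleton _) (.singleton _),
    ENNReal.toReal_mul]
  rfl

theorem measureReal_setOf_eq_bool [IsProbabilityMeasure μ] {A : Ω → Bool} (hA : Measurable A)
    {r : ℝ} (hr : 0 ≤ r) (hμA : μ {ω | A ω = true} = ENNReal.ofReal r) (b : Bool) :
    μ.real {ω | A ω = b} = if b then r else 1 - r := by
  have htrue : μ.real {ω | A ω = true} = r := by
    rw [measureReal_def, hμA, ENNReal.toReal_ofReal hr]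
  cases b
  · have hfalse : {ω | A ω = false} = {ω | A ω = true}ᶜ := by ext; simp
    rw [hfalse, probReal_compl_eq_one_sub (s := {ω | A ω = true})
      (hA (measurableSet_singleton true)), htrue]
    rfl
  · exact htrue

end ProbabilityTheory

theorem Fintype.prod_ite_eq_ite_mem_pow {α R : Type*} [Fintype α] [DecidableEq α] [CommMonoid R]
    (s : Finset α) (i : α) (a b c : R) :
    ∏ j, (if j = i then (if j ∈ s then a else b) else if j ∈ s then c else 1)
      = if i ∈ s then a * c ^ (s.card - 1) else b * c ^ s.card := by
  rw [← Finset.mul_prod_erase _ _ (Finset.mem_univ i), if_pos rfl,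
    Finset.prod_congr rfl fun j hj => if_neg (Finset.ne_of_mem_erase hj), Finset.prod_ite_mem,
    Finset.prod_const, Finset.erase_inter, Finset.univ_inter]
  split_ifs with hi
  · rw [Finset.card_erase_of_mem hi]
  · rw [Finset.erase_eq_of_notMem hi]

namespace GTModel

variable {Ω : Type} [MeasureSpace Ω] {M N : ℕ} {p u q : ℝ} (G : GTModel Ω M N p u q)

abbrev Coord (M N : ℕ) := (Fin M × Fin N) ⊕ ((Fin N × Fin M) ⊕ Fin M)

def coord : Coord M N → Ω → Bool :=
  Sum.elim (fun li => G.X li.1 li.2) (Sum.elim (fun il => G.d il.1 il.2) fun l => G.w l)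

theorem measurable_coord : ∀ t, Measurable (G.coord t)
  | .inl (l, i) => G.measX l i
  | .inr (.inl (i, l)) => G.measd i l
  | .inr (.inr l) => G.measw l

def testBlock (l : Fin M) : Option (Fin N) → Set (Coord M N)
  | none => {.inr (.inr l)}
  | some j => {.inl (l, j), .inr (.inl (j, l))}

theorem pairwise_disjoint_testBlock (l : Fin M) :
    Pairwise (Disjoint on testBlock (N := N) l) := by
  rintro (_ | j) (_ | j') h <;> simp_all [onFun, testBlock, eq_comm]

abbrev blockAlgebra (J : Set (Coord M N)) : MeasurableSpace Ω :=
  ⨆ t ∈ J, MeasurableSpace.comap (G.coord t) inferInstance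

theorem blockAlgebra_le (J : Set (Coord M N)) :
    G.blockAlgebra J ≤ MeasureSpace.toMeasurableSpace :=
  iSup₂_le fun t _ => (G.measurable_coord t).comap_le

theorem measurable_coord_blockAlgebra {J : Set (Coord M N)} {t : Coord M N} (ht : t ∈ J) :
    Measurable[G.blockAlgebra J] (G.coord t) :=
  Measurable.of_comap_le (le_iSup₂_of_le t ht le_rfl)

theorem iIndep_testBlock (l : Fin M) :
    iIndep (fun k => G.blockAlgebra (testBlock l k)) ℙ :=
  ((iIndepFun_iff_iIndep _ _ _).1 G.indep).iIndep_biSup (fun t => (G.measurable_coord t).comap_le)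
    (pairwise_disjoint_testBlock l)

def memNegTest (Sd : Finset (Fin N)) (l : Fin M) (i : Fin N) : Set Ω :=
  {ω | G.X l i ω = true ∧ G.Y Sd l ω = false}

def memNegTestFactor (Sd : Finset (Fin N)) (l : Fin M) (i : Fin N) : Option (Fin N) → Set Ω
  | none => {ω | G.w l ω = false}
  | some j =>
    {ω | (j = i → G.X l j ω = true) ∧ (j ∈ Sd → G.d j l ω = true → G.X l j ω = false)}

theorem Y_eq_false_iff (Sd : Finset (Fin N)) (l : Fin M) (ω : Ω) :
    G.Y Sd l ω = false ↔
      G.w l ω = false ∧ ∀ j ∈ Sd, G.d j l ω = true → G.X l j ω = false := by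
  rw [GTModel.Y, Bool.or_eq_false_iff, ← bot_eq_false, Finset.sup_eq_bot_iff]
  simp [and_comm]

theorem memNegTest_eq_iInter (Sd : Finset (Fin N)) (l : Fin M) (i : Fin N) :
    G.memNegTest Sd l i = ⋂ k, G.memNegTestFactor Sd l i k := by
  ext ω
  simp [memNegTest, memNegTestFactor, Y_eq_false_iff, Option.forall, forall_and, and_left_comm]

theorem measurableSet_memNegTestFactor (Sd : Finset (Fin N)) (l : Fin M) (i : Fin N) :
    ∀ k, MeasurableSet[G.blockAlgebra (testBlock l k)] (G.memNegTestFactor Sd l i k)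
  | none => G.measurable_coord_blockAlgebra (J := testBlock l none) (t := .inr (.inr l))
      (Set.mem_singleton _) (measurableSet_singleton false)
  | some j => by
    have hd := G.measurable_coord_blockAlgebra (J := testBlock l (some j)) (t := .inr (.inl (j, l)))
      (by simp [testBlock])
    have hX := G.measurable_coord_blockAlgebra (J := testBlock l (some j)) (t := .inl (l, j))
      (by simp [testBlock])
    exact (hd.prodMk hX) (MeasurableSet.of_discrete
      (s := {x : Bool × Bool |
        (j = i → x.2 = true) ∧ (j ∈ Sd → x.1 = true → x.2 = false)}))

theorem measurableSet_memNegTest (Sd : Finset (Fin N)) (l : Fin M) (i : Fin N) :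
    MeasurableSet (G.memNegTest Sd l i) := by
  rw [memNegTest_eq_iInter]
  exact .iInter fun k => G.blockAlgebra_le _ _ (G.measurableSet_memNegTestFactor Sd l i k)

theorem measureReal_memNegTestFactor_some (hp : 0 ≤ p) (hu : u ≤ 1) (Sd : Finset (Fin N))
    (l : Fin M) (i j : Fin N) :
    (ℙ : Measure Ω).real (G.memNegTestFactor Sd l i (some j))
      = if j = i then (if j ∈ Sd then u * p else p)
        else if j ∈ Sd then 1 - (1 - u) * p else 1 := by
  have := G.indep.isProbabilityMeasure
  have hind : IndepFun (G.d j l) (G.X l j) ℙ :=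
    G.indep.indepFun (i := .inr (.inl (j, l))) (j := .inl (l, j)) (by simp)
  rw [memNegTestFactor, hind.measureReal_setOf_bool (G.measd j l) (G.measX l j)
    fun a b => (j = i → b = true) ∧ (j ∈ Sd → a = true → b = false)]
  simp only [Fintype.sum_bool,
    measureReal_setOf_eq_bool (G.measd j l) (sub_nonneg.2 hu) (G.probd j l),
    measureReal_setOf_eq_bool (G.measX l j) hp (G.probX l j)]
  obtain rfl | hji := eq_or_ne j i <;> by_cases hjS : j ∈ Sd <;> simp [*] <;> ring

theorem measureReal_memNegTest (hp : 0 ≤ p) (hu : u ≤ 1) (hq : 0 ≤ q) (Sd : Finset (Fin N))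
    (l : Fin M) (i : Fin N) :
    (ℙ : Measure Ω).real (G.memNegTest Sd l i) = p * ((1 - q) *
      if i ∈ Sd then u * (1 - (1 - u) * p) ^ (Sd.card - 1) else (1 - (1 - u) * p) ^ Sd.card) := by
  have := G.indep.isProbabilityMeasure
  rw [memNegTest_eq_iInter, measureReal_def,
    (G.iIndep_testBlock l).meas_iInter (G.measurableSet_memNegTestFactor Sd l i),
    ENNReal.toReal_prod, Fintype.prod_option]
  simp only [← measureReal_def, measureReal_memNegTestFactor_some G hp hu,
    Fintype.prod_ite_eq_ite_mem_pow]
  rw [memNegTestFactor, measureReal_setOf_eq_bool (G.measw l) hq (G.probw l) false,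
    if_neg Bool.false_ne_true]
  split_ifs <;> ring

theorem T_eq_sum_indicator (Sd : Finset (Fin N)) (ψ : ℝ) (i : Fin N) (ω : Ω) :
    G.T Sd ψ i ω = ∑ l, ((1 + ψ) * (G.memNegTest Sd l i).indicator 1 ω
      - ψ * {ω | G.X l i ω = true}.indicator 1 ω) := by
  simp only [GTModel.T, Finset.mul_sum, ← Finset.sum_sub_distrib]
  refine Finset.sum_congr rfl fun l _ => ?_
  rcases hX : G.X l i ω <;> rcases hY : G.Y Sd l ω <;> simp [memNegTest, Set.indicator, hX, hY]

theorem integral_T (hp : 0 ≤ p) (Sd : Finset (Fin N)) (ψ : ℝ) (i : Fin N) {γ : ℝ}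
    (hγ : ∀ l, (ℙ : Measure Ω).real (G.memNegTest Sd l i) = p * γ) :
    ∫ ω, G.T Sd ψ i ω ∂ℙ = M * p * (γ - ψ * (1 - γ)) := by
  have := G.indep.isProbabilityMeasure
  have hneg l : Integrable ((G.memNegTest Sd l i).indicator (1 : Ω → ℝ)) ℙ :=
    (integrable_const 1).indicator (G.measurableSet_memNegTest Sd l i)
  have hX l : Integrable ({ω | G.X l i ω = true}.indicator (1 : Ω → ℝ)) ℙ :=
    (integrable_const 1).indicator (G.measX l i (measurableSet_singleton true))
  have hXp l : (ℙ : Measure Ω).real {ω | G.X l i ω = true} = p := by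
    rw [measureReal_def, G.probX, ENNReal.toReal_ofReal hp]
  simp_rw [T_eq_sum_indicator]
  rw [integral_finsetSum _ fun l _ => by exact ((hneg l).const_mul _).sub ((hX l).const_mul _)]
  simp only [integral_sub ((hneg _).const_mul _) ((hX _).const_mul _), integral_const_mul,
    integral_indicator_one (G.measurableSet_memNegTest Sd _ i),
    integral_indicator_one (s := {ω | G.X _ i ω = true})
      (G.measX _ i (measurableSet_singleton true)),
    hXp, hγ, Finset.sum_const, Finset.card_univ, Fintype.card_fin, nsmul_eq_mul]
  ring

end GTModel

theorem stmt_4_general {Ω : Type} [MeasureSpace Ω] (M N K : ℕ)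
    (p u q : ℝ) (hp : 0 < p) (hp1 : p < 1) (hu0 : 0 ≤ u) (hu1 : u < 1)
    (hq0 : 0 ≤ q)
    (Sd : Finset (Fin N)) (hSd : Sd.card = K)
    (G : GTModel Ω M N p u q) (ψ : ℝ) :
    (∀ j : Fin N, j ∉ Sd →
      ∫ ω, G.T Sd ψ j ω ∂(ℙ : Measure Ω)
        = M * p * ((1 - q) * (1 - (1 - u) * p) ^ K
            - ψ * (1 - (1 - q) * (1 - (1 - u) * p) ^ K)))
    ∧ (∀ i : Fin N, i ∈ Sd →
      ∫ ω, G.T Sd ψ i ω ∂(ℙ : Measure Ω)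
        = M * p * ((u / (1 - (1 - u) * p)) * ((1 - q) * (1 - (1 - u) * p) ^ K)
            - ψ * (1 - (u / (1 - (1 - u) * p)) * ((1 - q) * (1 - (1 - u) * p) ^ K)))) := by
  have hc : 1 - (1 - u) * p ≠ 0 := by nlinarith
  refine ⟨fun j hj => G.integral_T hp.le Sd ψ j fun l => ?_,
    fun i hi => G.integral_T hp.le Sd ψ i fun l => ?_⟩
  · rw [G.measureReal_memNegTest hp.le hu1.le hq0, if_neg hj, hSd]
  · obtain ⟨k, rfl⟩ : ∃ k, K = k + 1 :=
      Nat.exists_eq_add_one.2 (hSd ▸ Finset.card_pos.2 ⟨i, hi⟩)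
    have hγ : u / (1 - (1 - u) * p) * ((1 - q) * (1 - (1 - u) * p) ^ (k + 1))
        = (1 - q) * (u * (1 - (1 - u) * p) ^ k) := by
      rw [pow_succ]; field_simp
    rw [G.measureReal_memNegTest hp.le hu1.le hq0, if_pos hi, hSd, Nat.add_sub_cancel, hγ]

/-- With the column statistic `T(·)` built with constant `ψ ≥ 0`, for every
non-defective `j ∉ S_d`, `E[T(j)] = M·p·(Γ − ψ(1−Γ))`, and for every defective `i ∈ S_d`,
`E[T(i)] = M·p·(γ0Γ − ψ(1−γ0Γ))`, where `Γ = (1−q)(1−(1−u)p)^K`, `γ0 = u/(1−(1−u)p)`. -/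
theorem stmt_4 {Ω : Type} [MeasureSpace Ω] [IsProbabilityMeasure (ℙ : Measure Ω)]
    (M N K : ℕ) (hN : 2 ≤ N) (hK1 : 1 ≤ K) (hKN : K < N) (hM : 1 ≤ M)
    (p u q : ℝ) (hp : 0 < p) (hp1 : p < 1) (hu0 : 0 ≤ u) (hu1 : u < 1)
    (hq0 : 0 ≤ q) (hq1 : q < 1)
    (Sd : Finset (Fin N)) (hSd : Sd.card = K)
    (G : GTModel Ω M N p u q) (ψ : ℝ) (hψ : 0 ≤ ψ) :
    (∀ j : Fin N, j ∉ Sd →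
      ∫ ω, G.T Sd ψ j ω ∂(ℙ : Measure Ω)
        = M * p * ((1 - q) * (1 - (1 - u) * p) ^ K
            - ψ * (1 - (1 - q) * (1 - (1 - u) * p) ^ K)))
    ∧ (∀ i : Fin N, i ∈ Sd →
      ∫ ω, G.T Sd ψ i ω ∂(ℙ : Measure Ω)
        = M * p * ((u / (1 - (1 - u) * p)) * ((1 - q) * (1 - (1 - u) * p) ^ K)
            - ψ * (1 - (u / (1 - (1 - u) * p)) * ((1 - q) * (1 - (1 - u) * p) ^ K)))) :=
  stmt_4_general M N K p u q hp hp1 hu0 hu1 hq0 Sd hSd G ψ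
end

section
/- (Theorem 1, RoAl.) In the noisy non-adaptive group testing model with K ≥ 2, u ∈ [0, 1/2), q ∈ [0, 1/2), 1 ≤ L ≤ N−K, and p = 1/((1−u)K) (so that γ0 = uK/(K−1) < 1), define z(i) = Σ_{l=1}^M X_{li}·(1−Y_l) for each item i. For every constant c0 > 0 there exist constants C_a1, C_a2 > 0, not depending on N, L or K, such that whenever M ≥ (1+c0)·[K(1−u)/((1−q)(1−γ0)²)]·( C_a1·log(K·C(N−K, L−1))/((N−K)−(L−1)) + C_a2·log K ), the event { for every defective item i ∈ S_d, at least L non-defective items j ∉ S_d satisfy z(j) > z(i) } — so that any L items with the largest values of z are all non-defective — has probability at least 1 − exp(−c0·log(K·C(N−K, L−1))) − exp(−c0·log K). -/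
/-!
Every event of the model is a function of the independent Bernoulli coordinates `X l i`, `d i l`,
`w l`, so its probability is a finite sum against a product weight (`prodProb`), and events that
read disjoint sets of coordinates are independent.

A test is negative with probability `Γ = (1 - q) (1 - (1 - u) p) ^ K`; a defective item lies in a
negative test with probability `γ0 p Γ`, a non-defective one with probability `p Γ`. With
`g = 1 - γ0`, `τ = M p Γ (1 - g / 2)` and `ρ = M p Γ g ^ 2`, Chernoff bounds give:
* `z(i) < τ` for a defective `i`, except with probability `exp (-ρ / 16)`;
* at least `M Γ (1 - g / 8)` negative tests, except with probability `exp (-ρ / 256)`;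
* given the outcomes of the tests, which do not read the columns of non-defective items, the
  `z(j)` of the non-defective items are independent binomials, so `m` given ones all stay below
  `τ` with probability at most `exp (-9 ρ / 256) ^ m`.
If RoAl fails while every defective item has `z < τ`, then some `m = (N - K) - (L - 1)`
non-defective items have `z < τ`, and a union bound over the `C(N - K, L - 1)` such sets concludes.
For `p = 1 / ((1 - u) K)` one has `(1 - 1 / K) ^ K ≥ 1 / 4`, which turns the hypothesis on `M`
into the lower bounds on `ρ` that this needs.
-/

open MeasureTheory ProbabilityTheory

open Finset Real

namespace GroupTesting

theorem sum_sum_mul_mul_of_sum_eq_one {α β : Type*} [Fintype α] [Fintype β] (a f : α → ℝ)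
    (c k : β → ℝ) (ha : ∑ x, a x = 1) (hc : ∑ y, c y = 1) :
    ∑ x, ∑ y, a x * c y * (f x * k y) =
      (∑ x, ∑ y, a x * c y * f x) * ∑ x, ∑ y, a x * c y * k y := by
  simp only [show ∀ x y, a x * c y * (f x * k y) = a x * f x * (c y * k y) from
      fun _ _ => by ring,
    show ∀ x y, a x * c y * f x = a x * f x * c y from fun _ _ => by ring,
    show ∀ x y, a x * c y * k y = a x * (c y * k y) from fun _ _ => by ring, ← sum_mul_sum,
    ha, hc]
  ring

theorem dependsOn_indicator {ι : Type*} {A : (ι → Bool) → Prop} [DecidablePred A] {S : Set ι}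
    (hA : DependsOn A S) : DependsOn (fun b => if A b then (1 : ℝ) else 0) S :=
  fun _ _ h => by simp only [hA h]

section ProductExpectation

variable {ι κ : Type*} [Fintype ι]

def prodWeight (p : ι → ℝ) (b : ι → Bool) : ℝ := ∏ i, if b i then p i else 1 - p i

theorem ite_one_sub_nonneg {a : ℝ} (ha : a ∈ Set.Icc 0 1) (v : Bool) :
    0 ≤ if v then a else 1 - a := by
  split_ifs <;> linarith [ha.1, ha.2]

theorem prodWeight_nonneg {p : ι → ℝ} (hp : ∀ i, p i ∈ Set.Icc 0 1) (b : ι → Bool) :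
    0 ≤ prodWeight p b :=
  prod_nonneg fun i _ => ite_one_sub_nonneg (hp i) (b i)

variable [DecidableEq ι]

noncomputable def prodExpect (p : ι → ℝ) (F : (ι → Bool) → ℝ) : ℝ :=
  ∑ b, prodWeight p b * F b

open Classical in
noncomputable def prodProb (p : ι → ℝ) (A : (ι → Bool) → Prop) : ℝ :=
  prodExpect p fun b => if A b then 1 else 0

variable {p : ι → ℝ}

theorem prodExpect_prod_apply (g : ι → Bool → ℝ) :
    prodExpect p (fun b => ∏ i, g i (b i)) = ∏ i, ((1 - p i) * g i false + p i * g i true) := by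
  have hg : ∀ i, (1 - p i) * g i false + p i * g i true
      = ∑ v : Bool, (if v then p i else 1 - p i) * g i v := fun i => by simp [add_comm]
  simp_rw [hg, prod_univ_sum, Fintype.piFinset_univ, prodExpect, prodWeight, prod_mul_distrib]

theorem sum_prodWeight (p : ι → ℝ) : ∑ b, prodWeight p b = 1 := by
  simpa [prodExpect] using prodExpect_prod_apply (p := p) fun _ _ => 1

theorem prodExpect_const_mul (c : ℝ) (F : (ι → Bool) → ℝ) :
    prodExpect p (fun b => c * F b) = c * prodExpect p F := by
  simp [prodExpect, mul_sum, mul_left_comm]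

theorem prodExpect_const (c : ℝ) : prodExpect p (fun _ => c) = c := by
  simp [prodExpect, ← sum_mul, sum_prodWeight]

theorem prodExpect_add (F G : (ι → Bool) → ℝ) :
    prodExpect p (fun b => F b + G b) = prodExpect p F + prodExpect p G := by
  simp [prodExpect, mul_add, sum_add_distrib]

theorem prodExpect_sum (s : Finset κ) (F : κ → (ι → Bool) → ℝ) :
    prodExpect p (fun b => ∑ k ∈ s, F k b) = ∑ k ∈ s, prodExpect p (F k) := by
  simp only [prodExpect, mul_sum]
  exact sum_comm

theorem prodExpect_mono (hp : ∀ i, p i ∈ Set.Icc 0 1) {F G : (ι → Bool) → ℝ}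
    (h : ∀ b, F b ≤ G b) : prodExpect p F ≤ prodExpect p G :=
  sum_le_sum fun b _ => mul_le_mul_of_nonneg_left (h b) (prodWeight_nonneg hp b)

theorem prodExpect_apply (f : Bool → ℝ) (i : ι) :
    prodExpect p (fun b => f (b i)) = (1 - p i) * f false + p i * f true := by
  have h := prodExpect_prod_apply (p := p) fun j v => if j = i then f v else 1
  simp only [prod_ite_eq', mem_univ, if_true] at h
  rw [h, prod_eq_single i (fun j _ hj => by simp [hj]) (by simp)]
  simp

theorem prodExpect_mul_of_dependsOn {F G : (ι → Bool) → ℝ} {S : Set ι}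
    (hF : DependsOn F S) (hG : DependsOn G Sᶜ) :
    prodExpect p (fun b => F b * G b) = prodExpect p F * prodExpect p G := by
  classical
  set e := (Equiv.piEquivPiSubtypeProd (· ∈ S) fun _ => Bool).symm
  have he : ∀ x i, e x i = if h : i ∈ S then x.1 ⟨i, h⟩ else x.2 ⟨i, h⟩ :=
    fun _ _ => rfl
  have hsplit : ∀ H, prodExpect p H =
      ∑ x, prodWeight (fun i : S => p i) x.1 * prodWeight (fun i : {i // i ∉ S} => p i) x.2 *
        H (e x) := by
    intro H
    rw [prodExpect, ← e.sum_comp]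
    refine sum_congr rfl fun x _ => ?_
    rw [prodWeight, ← Fintype.prod_subtype_mul_prod_subtype (· ∈ S)]
    congr 2 <;> refine prod_congr rfl fun i _ => ?_ <;> simp [he, i.2]
  have hF' : ∀ x, F (e x) = F (e (x.1, fun _ => false)) := fun x => hF fun i hi => by
    simp [he, hi]
  have hG' : ∀ x, G (e x) = G (e (fun _ => false, x.2)) := fun x => hG fun i hi => by
    simp [he, Set.notMem_of_mem_compl hi]
  simp only [hsplit, Fintype.sum_prod_type]
  simp_rw [hF', hG']
  exact sum_sum_mul_mul_of_sum_eq_one _ _ _ _ (sum_prodWeight _) (sum_prodWeight _)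

theorem prodExpect_prod_of_dependsOn {s : Finset κ} {F : κ → (ι → Bool) → ℝ}
    {S : κ → Set ι} (hS : (s : Set κ).PairwiseDisjoint S)
    (hF : ∀ k ∈ s, DependsOn (F k) (S k)) :
    prodExpect p (fun b => ∏ k ∈ s, F k b) = ∏ k ∈ s, prodExpect p (F k) := by
  classical
  induction s using Finset.induction_on with
  | empty => simp [prodExpect_const]
  | insert a s ha ih =>
    simp only [prod_insert ha]
    rw [prodExpect_mul_of_dependsOn (S := S a) (hF a (mem_insert_self a s)), ih]
    · exact hS.subset (by simp)
    · exact fun k hk => hF k (mem_insert_of_mem hk)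
    · intro x y hxy
      refine prod_congr rfl fun k hk => hF k (mem_insert_of_mem hk) fun i hi => hxy i ?_
      exact Set.disjoint_right.1 (hS (by simp) (by simp [hk]) (by rintro rfl; exact ha hk)) hi

theorem prodExpect_indicator (A : (ι → Bool) → Prop) [DecidablePred A] :
    prodExpect p (fun b => if A b then 1 else 0) = prodProb p A := by
  unfold prodProb
  congr! 3

theorem prodProb_le_prodExpect (hp : ∀ i, p i ∈ Set.Icc 0 1) {A : (ι → Bool) → Prop}
    {F : (ι → Bool) → ℝ}
    (hF : ∀ b, 0 ≤ F b) (h : ∀ b, A b → 1 ≤ F b) : prodProb p A ≤ prodExpect p F := by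
  classical
  rw [← prodExpect_indicator]
  exact prodExpect_mono hp fun b => by split_ifs with hb; exacts [h b hb, hF b]

theorem prodProb_mono (hp : ∀ i, p i ∈ Set.Icc 0 1) {A B : (ι → Bool) → Prop}
    (h : ∀ b, A b → B b) : prodProb p A ≤ prodProb p B :=
  prodExpect_mono hp fun b => by
    by_cases hA : A b
    · simp [hA, h b hA]
    · by_cases hB : B b <;> simp [hA, hB]

theorem prodProb_or_le (hp : ∀ i, p i ∈ Set.Icc 0 1) (A B : (ι → Bool) → Prop) :
    prodProb p (fun b => A b ∨ B b) ≤ prodProb p A + prodProb p B := by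
  unfold prodProb
  rw [← prodExpect_add]
  exact prodExpect_mono hp fun b => by split_ifs <;> simp_all

theorem prodProb_exists_le (hp : ∀ i, p i ∈ Set.Icc 0 1) (s : Finset κ)
    (A : κ → (ι → Bool) → Prop) :
    prodProb p (fun b => ∃ k ∈ s, A k b) ≤ ∑ k ∈ s, prodProb p (A k) := by
  classical
  unfold prodProb
  rw [← prodExpect_sum]
  refine prodExpect_mono hp fun b => ?_
  split_ifs with h
  · obtain ⟨k, hk, hAk⟩ := h
    exact (if_pos hAk).symm.le.trans
      (single_le_sum (f := fun k => if A k b then (1 : ℝ) else 0) (fun _ _ => by positivity) hk)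
  · exact sum_nonneg fun _ _ => by positivity

theorem prodProb_not (A : (ι → Bool) → Prop) :
    prodProb p (fun b => ¬ A b) = 1 - prodProb p A := by
  classical
  simp only [← prodExpect_indicator]
  rw [eq_sub_iff_add_eq, ← prodExpect_add]
  convert prodExpect_const (p := p) (1 : ℝ) using 2
  funext b
  by_cases h : A b <;> simp [h]

theorem prodProb_coord_eq (i : ι) (v : Bool) :
    prodProb p (fun b => b i = v) = if v then p i else 1 - p i := by
  rw [← prodExpect_indicator,
    prodExpect_apply (p := p) (fun w => if w = v then (1 : ℝ) else 0) i]
  cases v <;> simp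

theorem prodProb_and_of_dependsOn {A B : (ι → Bool) → Prop} {S : Set ι}
    (hA : DependsOn A S) (hB : DependsOn B Sᶜ) :
    prodProb p (fun b => A b ∧ B b) = prodProb p A * prodProb p B := by
  classical
  simp only [← prodExpect_indicator]
  rw [← prodExpect_mul_of_dependsOn (dependsOn_indicator hA) (dependsOn_indicator hB)]
  congr 1
  funext b
  by_cases hA : A b <;> by_cases hB : B b <;> simp [hA, hB]

theorem prodProb_coord_eq_and_coord_eq {i j : ι} (hij : i ≠ j) (v w : Bool) :
    prodProb p (fun b => b i = v ∧ b j = w) =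
      (if v then p i else 1 - p i) * if w then p j else 1 - p j := by
  rw [prodProb_and_of_dependsOn (S := {i}) (fun _ _ h => by rw [h i rfl])
    (fun _ _ h => by rw [h j (by simpa using hij.symm)]), prodProb_coord_eq, prodProb_coord_eq]

theorem prodProb_forall_of_dependsOn {s : Finset κ} {A : κ → (ι → Bool) → Prop}
    {S : κ → Set ι} (hS : (s : Set κ).PairwiseDisjoint S)
    (hA : ∀ k ∈ s, DependsOn (A k) (S k)) :
    prodProb p (fun b => ∀ k ∈ s, A k b) = ∏ k ∈ s, prodProb p (A k) := by
  classical
  simp only [← prodExpect_indicator]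
  rw [← prodExpect_prod_of_dependsOn hS fun k hk => dependsOn_indicator (hA k hk)]
  congr 1
  funext b
  rw [prod_boole]

theorem sum_prodProb_eq_one {β : Type*} [Fintype β] (f : (ι → Bool) → β) :
    ∑ y, prodProb p (fun b => f b = y) = 1 := by
  classical
  simp only [← prodExpect_indicator, ← prodExpect_sum]
  simp [prodExpect_const]

theorem prodProb_nonneg (hp : ∀ i, p i ∈ Set.Icc 0 1) (A : (ι → Bool) → Prop) :
    0 ≤ prodProb p A := by
  classical
  have := prodExpect_mono hp (F := fun _ => 0) (G := fun b => if A b then (1 : ℝ) else 0)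
    fun b => by split_ifs <;> norm_num
  rwa [prodExpect_const, prodExpect_indicator] at this

theorem prodProb_le_one (hp : ∀ i, p i ∈ Set.Icc 0 1) (A : (ι → Bool) → Prop) :
    prodProb p A ≤ 1 := by
  have := prodProb_nonneg hp fun b => ¬ A b
  rw [prodProb_not] at this
  linarith

end ProductExpectation

section Chernoff

variable {ι κ : Type*} [Fintype ι] [DecidableEq ι] [Fintype κ] {p : ι → ℝ}
  (φ : ι → κ) (A : κ → (ι → Bool) → Prop) [∀ k b, Decidable (A k b)]

theorem prodExpect_exp_mul_card_le (hp : ∀ i, p i ∈ Set.Icc 0 1)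
    (hA : ∀ k, DependsOn (A k) (φ ⁻¹' {k})) (s : ℝ) :
    prodExpect p (fun b => exp (s * #{k | A k b})) ≤
      exp ((exp s - 1) * ∑ k, prodProb p (A k)) := by
  have hpt : ∀ b, exp (s * #{k | A k b}) = ∏ k, (1 + (exp s - 1) * if A k b then 1 else 0) := by
    intro b
    rw [card_filter, Nat.cast_sum, mul_sum, exp_sum]
    refine prod_congr rfl fun k _ => ?_
    split_ifs <;> simp
  have hfac : ∀ k, prodExpect p (fun b => 1 + (exp s - 1) * if A k b then 1 else 0) =
      1 + (exp s - 1) * prodProb p (A k) := fun k => by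
    rw [prodExpect_add, prodExpect_const, prodExpect_const_mul, prodExpect_indicator]
  simp_rw [hpt]
  rw [prodExpect_prod_of_dependsOn ((Set.pairwiseDisjoint_fiber φ _).subset (Set.subset_univ _))
    fun k _ b b' h => by simp only [hA k h], mul_sum, exp_sum]
  simp_rw [hfac]
  refine prod_le_prod (fun k _ => ?_) fun k _ => ?_
  · nlinarith [prodProb_nonneg hp (A k), prodProb_le_one hp (A k), exp_pos s]
  · linarith [add_one_le_exp ((exp s - 1) * prodProb p (A k))]

theorem prodProb_card_ge_le (hp : ∀ i, p i ∈ Set.Icc 0 1)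
    (hA : ∀ k, DependsOn (A k) (φ ⁻¹' {k})) {t : ℝ} (ht : 0 ≤ t) (θ : ℝ) :
    prodProb p (fun b => θ ≤ #{k | A k b}) ≤
      exp ((exp t - 1) * ∑ k, prodProb p (A k) - t * θ) := by
  calc prodProb p (fun b => θ ≤ #{k | A k b})
      ≤ prodExpect p (fun b => exp (-(t * θ)) * exp (t * #{k | A k b})) :=
        prodProb_le_prodExpect hp (fun b => by positivity) fun b hb => by
          rw [← exp_add, one_le_exp_iff]; nlinarith
    _ ≤ exp (-(t * θ)) * exp ((exp t - 1) * ∑ k, prodProb p (A k)) := by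
        rw [prodExpect_const_mul]
        exact mul_le_mul_of_nonneg_left (prodExpect_exp_mul_card_le φ A hp hA t) (exp_pos _).le
    _ = _ := by rw [← exp_add]; ring_nf

theorem prodProb_card_lt_le (hp : ∀ i, p i ∈ Set.Icc 0 1)
    (hA : ∀ k, DependsOn (A k) (φ ⁻¹' {k})) {t : ℝ} (ht : 0 ≤ t) (θ : ℝ) :
    prodProb p (fun b => (#{k | A k b} : ℝ) < θ) ≤
      exp (t * θ - (1 - exp (-t)) * ∑ k, prodProb p (A k)) := by
  calc prodProb p (fun b => (#{k | A k b} : ℝ) < θ)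
      ≤ prodExpect p (fun b => exp (t * θ) * exp (-t * #{k | A k b})) :=
        prodProb_le_prodExpect hp (fun b => by positivity) fun b hb => by
          rw [← exp_add, one_le_exp_iff]; nlinarith
    _ ≤ exp (t * θ) * exp ((exp (-t) - 1) * ∑ k, prodProb p (A k)) := by
        rw [prodExpect_const_mul]
        exact mul_le_mul_of_nonneg_left (prodExpect_exp_mul_card_le φ A hp hA (-t)) (exp_pos _).le
    _ = _ := by rw [← exp_add]; ring_nf

end Chernoff
section Transfer

variable {Ω : Type*} [MeasurableSpace Ω] {μ : Measure Ω} [IsProbabilityMeasure μ]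

theorem measure_preimage_singleton_eq {g : Ω → Bool} {a : ℝ} (hg : Measurable g) (ha : 0 ≤ a)
    (hga : μ {ω | g ω = true} = ENNReal.ofReal a) (v : Bool) :
    μ (g ⁻¹' {v}) = ENNReal.ofReal (if v then a else 1 - a) := by
  have htrue : g ⁻¹' {true} = {ω | g ω = true} := rfl
  cases v
  · rw [show g ⁻¹' {false} = (g ⁻¹' {true})ᶜ by ext; simp,
      prob_compl_eq_one_sub (hg (measurableSet_singleton _)), htrue, hga,
      ← ENNReal.ofReal_one, ← ENNReal.ofReal_sub _ ha]
    rfl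
  · exact hga

variable {ι : Type*} [Fintype ι] [DecidableEq ι] {f : ι → Ω → Bool} {p : ι → ℝ}

theorem measure_setOf_eq_prodProb (hf : ∀ i, Measurable (f i)) (hind : iIndepFun f μ)
    (hp : ∀ i, p i ∈ Set.Icc 0 1) (hfp : ∀ i, μ {ω | f i ω = true} = ENNReal.ofReal (p i))
    (A : (ι → Bool) → Prop) :
    μ {ω | A fun i => f i ω} = ENNReal.ofReal (prodProb p A) := by
  classical
  have hatoms :
      {ω | A fun i => f i ω} = ⋃ b ∈ ({b | A b} : Finset _), ⋂ i, f i ⁻¹' {b i} := by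
    ext ω
    simp only [Set.mem_ofPred_eq, Set.mem_iUnion, Set.mem_iInter, Set.mem_preimage,
      Set.mem_singleton_iff, mem_filter, mem_univ, true_and, exists_prop]
    exact ⟨fun h => ⟨_, h, fun _ => rfl⟩,
      fun ⟨b, hb, hbω⟩ => (funext hbω : (fun i => f i ω) = b) ▸ hb⟩
  have hatom : ∀ b : ι → Bool,
      μ (⋂ i, f i ⁻¹' {b i}) = ENNReal.ofReal (prodWeight p b) := by
    intro b
    rw [hind.meas_iInter fun i => ⟨{b i}, measurableSet_singleton _, rfl⟩, prodWeight,
      ENNReal.ofReal_prod_of_nonneg fun i _ => ite_one_sub_nonneg (hp i) (b i)]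
    exact prod_congr rfl fun i _ => measure_preimage_singleton_eq (hf i) (hp i).1 (hfp i) (b i)
  rw [hatoms, measure_biUnion_finset, ← prodExpect_indicator, prodExpect]
  · simp only [hatom, mul_ite, mul_one, mul_zero, ← sum_filter]
    rw [ENNReal.ofReal_sum_of_nonneg fun b _ => prodWeight_nonneg hp b]
  · intro b _ b' _ hne
    refine Set.disjoint_left.2 fun ω hω hω' => hne (funext fun i => ?_)
    simp only [Set.mem_iInter, Set.mem_preimage, Set.mem_singleton_iff] at hω hω'
    rw [← hω i, ← hω' i]
  · exact fun b _ => MeasurableSet.iInter fun i => hf i (measurableSet_singleton _)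

end Transfer

section Model

/-- The coordinates `X l i`, `d i l`, `w l` of the model, indexed as in `GTModel.indep`. -/
abbrev GTCoord (M N : ℕ) := (Fin M × Fin N) ⊕ ((Fin N × Fin M) ⊕ Fin M)

variable {M N : ℕ}

def coordX (l : Fin M) (i : Fin N) : GTCoord M N := .inl (l, i)

def coordD (i : Fin N) (l : Fin M) : GTCoord M N := .inr (.inl (i, l))

def coordW (l : Fin M) : GTCoord M N := .inr (.inr l)

def testOf : GTCoord M N → Fin M := Sum.elim Prod.fst (Sum.elim Prod.snd id)

def itemOf : GTCoord M N → Option (Fin N) :=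
  Sum.elim (some ∘ Prod.snd) (Sum.elim (some ∘ Prod.fst) fun _ => none)

noncomputable def gtProb (p u q : ℝ) : GTCoord M N → ℝ :=
  Sum.elim (fun _ => p) (Sum.elim (fun _ => 1 - u) fun _ => q)

noncomputable def outcome (Sd : Finset (Fin N)) (b : GTCoord M N → Bool) (l : Fin M) : Bool :=
  (Sd.sup fun i => b (coordD i l) && b (coordX l i)) || b (coordW l)

/-- `z(j)` in the paper's notation. -/
noncomputable def negCount (Sd : Finset (Fin N)) (b : GTCoord M N → Bool) (j : Fin N) : ℕ :=
  #{l | b (coordX l j) = true ∧ outcome Sd b l = false}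

noncomputable def numNeg (Sd : Finset (Fin N)) (b : GTCoord M N → Bool) : ℕ :=
  #{l | outcome Sd b l = false}

def colCount (y : Fin M → Bool) (b : GTCoord M N → Bool) (j : Fin N) : ℕ :=
  #{l | y l = false ∧ b (coordX l j) = true}

def roalSuccess (Sd : Finset (Fin N)) (L : ℕ) (b : GTCoord M N → Bool) : Prop :=
  ∀ i ∈ Sd, L ≤ #{j | j ∉ Sd ∧ negCount Sd b i < negCount Sd b j}

/-- `Γ`, the probability that a test is negative when there are `K` defective items. -/
noncomputable def negProb (p u q : ℝ) (K : ℕ) : ℝ := (1 - q) * (1 - (1 - u) * p) ^ K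

noncomputable def gamma0 (p u : ℝ) : ℝ := u / (1 - (1 - u) * p)

theorem gtProb_mem_Icc {p u q : ℝ} (hp : p ∈ Set.Icc 0 1) (hu : u ∈ Set.Icc 0 1)
    (hq : q ∈ Set.Icc 0 1) (t : GTCoord M N) : gtProb p u q t ∈ Set.Icc 0 1 := by
  rcases t with _ | _ | _ <;> simp only [gtProb, Sum.elim_inl, Sum.elim_inr]
  exacts [hp, ⟨by linarith [hu.2], by linarith [hu.1]⟩, hq]

variable {Sd : Finset (Fin N)} {b : GTCoord M N → Bool} {l : Fin M}

theorem pairwiseDisjoint_itemOf_fiber (s : Set (Fin N)) :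
    s.PairwiseDisjoint fun k => itemOf (M := M) ⁻¹' {some k} := fun _ _ _ _ hne =>
  Set.disjoint_left.2 fun _ h h' => hne (Option.some_injective _ (h.symm.trans h'))

theorem outcome_eq_false_iff :
    outcome Sd b l = false ↔
      (∀ k ∈ Sd, ¬ (b (coordD k l) = true ∧ b (coordX l k) = true)) ∧
        b (coordW l) = false := by
  have := Finset.sup_eq_bot_iff (fun k => b (coordD k l) && b (coordX l k)) Sd
  simp [outcome, show (⊥ : Bool) = false from rfl] at this ⊢
  simp [this]

theorem dependsOn_outcome {T : Set (GTCoord M N)}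
    (hSd : ∀ k ∈ Sd, coordD k l ∈ T ∧ coordX l k ∈ T) (hW : coordW l ∈ T) :
    DependsOn (fun b => outcome Sd b l) T := fun b b' h => by
  simp only [outcome, h _ hW]
  congr 1
  exact Finset.sup_congr rfl fun k hk => by rw [h _ (hSd k hk).1, h _ (hSd k hk).2]

variable (p u q : ℝ)

theorem prodProb_not_coordD_and_coordX (k : Fin N) (l : Fin M) :
    prodProb (gtProb p u q) (fun b => ¬ (b (coordD k l) = true ∧ b (coordX l k) = true)) =
      1 - (1 - u) * p := by
  rw [prodProb_not, prodProb_coord_eq_and_coord_eq (show coordD k l ≠ coordX l k by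
    simp [coordD, coordX])]
  rfl

theorem prodProb_outcome_eq_false (Sd : Finset (Fin N)) (l : Fin M) :
    prodProb (gtProb p u q) (fun b => outcome Sd b l = false) = negProb p u q #Sd := by
  simp_rw [outcome_eq_false_iff]
  rw [prodProb_and_of_dependsOn (S := {coordW l}ᶜ) ?_ (fun b b' h => by rw [h _ (by simp)]),
    prodProb_forall_of_dependsOn (pairwiseDisjoint_itemOf_fiber _) fun k _ b b' h => by
      simp only [h (coordD k l) rfl, h (coordX l k) rfl],
    prod_congr rfl fun k _ => prodProb_not_coordD_and_coordX p u q k l, prod_const,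
    prodProb_coord_eq]
  · simp only [gtProb, coordW, Sum.elim_inr, Bool.false_eq_true, if_false, negProb]
    ring
  · intro b b' h
    have hD : ∀ k, b (coordD k l) = b' (coordD k l) := fun k => h _ (by simp [coordD, coordW])
    have hX : ∀ k, b (coordX l k) = b' (coordX l k) := fun k => h _ (by simp [coordX, coordW])
    simp only [hD, hX]

theorem coordX_and_outcome_eq_false_iff {i : Fin N} (hi : i ∈ Sd) :
    (b (coordX l i) = true ∧ outcome Sd b l = false) ↔
      (b (coordX l i) = true ∧ b (coordD i l) = false) ∧ outcome (Sd.erase i) b l = false := by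
  conv_lhs => rw [outcome_eq_false_iff, ← insert_erase hi, forall_mem_insert]
  rw [outcome_eq_false_iff]
  cases b (coordX l i) <;> cases b (coordD i l) <;> simp

theorem prodProb_coordX_and_outcome_eq_false {i : Fin N} (hi : i ∈ Sd) :
    prodProb (gtProb p u q) (fun b => b (coordX l i) = true ∧ outcome Sd b l = false) =
      p * u * negProb p u q (#Sd - 1) := by
  simp_rw [coordX_and_outcome_eq_false_iff hi]
  rw [prodProb_and_of_dependsOn (S := itemOf ⁻¹' {some i})
      (fun b b' h => by simp only [h (coordX l i) rfl, h (coordD i l) rfl]) ?_,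
    prodProb_coord_eq_and_coord_eq (show coordX l i ≠ coordD i l by simp [coordX, coordD]),
    prodProb_outcome_eq_false, card_erase_of_mem hi]
  · simp [gtProb, coordX, coordD]
  · refine fun b b' h => congrArg (· = false) (dependsOn_outcome (fun k hk => ?_) ?_ h)
    · have hki : k ≠ i := ne_of_mem_erase hk
      simpa [itemOf, coordD, coordX] using hki
    · simp [itemOf, coordW]

end Model

def _root_.GTModel.sample {Ω : Type} [MeasureSpace Ω] {M N : ℕ} {p u q : ℝ}
    (G : GTModel Ω M N p u q) (ω : Ω) : GTCoord M N → Bool :=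
  fun t => Sum.elim (fun li => G.X li.1 li.2) (Sum.elim (fun il => G.d il.1 il.2) G.w) t ω

theorem _root_.GTModel.measure_setOf_sample_eq {Ω : Type} [MeasureSpace Ω]
    [IsProbabilityMeasure (ℙ : Measure Ω)] {M N : ℕ} {p u q : ℝ} (G : GTModel Ω M N p u q)
    (hp : p ∈ Set.Icc 0 1) (hu : u ∈ Set.Icc 0 1) (hq : q ∈ Set.Icc 0 1)
    (A : (GTCoord M N → Bool) → Prop) :
    (ℙ : Measure Ω) {ω | A (G.sample ω)} = ENNReal.ofReal (prodProb (gtProb p u q) A) := by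
  refine measure_setOf_eq_prodProb (f := fun t ω => G.sample ω t) ?_ G.indep
    (gtProb_mem_Icc hp hu hq) ?_ A
  · rintro (⟨l, i⟩ | ⟨i, l⟩ | l)
    exacts [G.measX l i, G.measd i l, G.measw l]
  · rintro (⟨l, i⟩ | ⟨i, l⟩ | l)
    exacts [G.probX l i, G.probd i l, G.probw l]

theorem exp_sub_one_le_add_sq {x : ℝ} (h0 : 0 ≤ x) (h1 : x ≤ 1) :
    exp x - 1 ≤ x + x ^ 2 := by
  have := abs_exp_sub_one_sub_id_le (abs_le.2 ⟨by linarith, h1⟩)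
  linarith [(abs_le.1 this).2]

theorem sub_sq_le_one_sub_exp_neg {x : ℝ} (h0 : 0 ≤ x) (h1 : x ≤ 1) :
    x - x ^ 2 ≤ 1 - exp (-x) := by
  have := abs_exp_sub_one_sub_id_le (x := -x) (abs_le.2 ⟨by linarith, by linarith⟩)
  linarith [(abs_le.1 this).2, neg_sq x]

section Tails

variable {M N : ℕ} {p u q : ℝ} {Sd : Finset (Fin N)}

theorem dependsOn_outcome_testOf (Sd : Finset (Fin N)) (l : Fin M) :
    DependsOn (fun b => outcome Sd b l) (testOf ⁻¹' {l}) :=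
  dependsOn_outcome (fun _ _ => ⟨rfl, rfl⟩) rfl

theorem negProb_nonneg (hp : p ∈ Set.Icc 0 1) (hu : u ∈ Set.Icc 0 1) (hq : q ∈ Set.Icc 0 1)
    (K : ℕ) : 0 ≤ negProb p u q K :=
  mul_nonneg (by linarith [hq.2]) (pow_nonneg (by nlinarith [hp.1, hp.2, hu.1, hu.2]) K)

theorem mul_negProb_pred (hβ : 0 < 1 - (1 - u) * p) {K : ℕ} (hK : K ≠ 0) :
    p * u * negProb p u q (K - 1) = gamma0 p u * (p * negProb p u q K) := by
  obtain ⟨K, rfl⟩ := Nat.exists_eq_succ_of_ne_zero hK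
  rw [negProb, negProb, gamma0, Nat.succ_sub_one, pow_succ, div_mul_eq_mul_div,
    eq_div_iff hβ.ne']
  ring

theorem prodProb_negCount_ge_le (hp : p ∈ Set.Icc 0 1) (hu : u ∈ Set.Icc 0 1)
    (hq : q ∈ Set.Icc 0 1) {i : Fin N} (hi : i ∈ Sd) {t : ℝ} (ht : 0 ≤ t) (θ : ℝ) :
    prodProb (gtProb p u q) (fun b : GTCoord M N → Bool => θ ≤ negCount Sd b i) ≤
      exp ((exp t - 1) * (M * (p * u * negProb p u q (#Sd - 1))) - t * θ) := by
  have := prodProb_card_ge_le (testOf (M := M))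
    (fun l b => b (coordX l i) = true ∧ outcome Sd b l = false)
    (gtProb_mem_Icc hp hu hq) (fun l b b' h => by
      simp only [h (coordX l i) rfl, dependsOn_outcome_testOf Sd l h]) ht θ
  simp only [prodProb_coordX_and_outcome_eq_false p u q hi, sum_const, card_univ,
    Fintype.card_fin, nsmul_eq_mul] at this
  exact this

theorem prodProb_numNeg_lt_le (hp : p ∈ Set.Icc 0 1) (hu : u ∈ Set.Icc 0 1)
    (hq : q ∈ Set.Icc 0 1) {t : ℝ} (ht : 0 ≤ t) (θ : ℝ) :
    prodProb (gtProb p u q) (fun b : GTCoord M N → Bool => (numNeg Sd b : ℝ) < θ) ≤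
      exp (t * θ - (1 - exp (-t)) * (M * negProb p u q #Sd)) := by
  have := prodProb_card_lt_le (testOf (M := M)) (fun l b => outcome Sd b l = false)
    (gtProb_mem_Icc hp hu hq) (fun l b b' h => by
      simp only [dependsOn_outcome_testOf Sd l h]) ht θ
  simp only [prodProb_outcome_eq_false, sum_const, card_univ, Fintype.card_fin,
    nsmul_eq_mul] at this
  exact this

theorem prodProb_colCount_lt_le (hp : p ∈ Set.Icc 0 1) (hu : u ∈ Set.Icc 0 1)
    (hq : q ∈ Set.Icc 0 1) (y : Fin M → Bool) (j : Fin N) {t : ℝ} (ht : 0 ≤ t) (θ : ℝ) :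
    prodProb (gtProb p u q) (fun b => (colCount y b j : ℝ) < θ) ≤
      exp (t * θ - (1 - exp (-t)) * (p * #{l | y l = false})) := by
  have := prodProb_card_lt_le (testOf (M := M)) (fun l b => y l = false ∧ b (coordX l j) = true)
    (gtProb_mem_Icc hp hu hq) (fun l b b' h => by simp only [h (coordX l j) rfl]) ht θ
  have hsum : ∑ l, prodProb (gtProb p u q) (fun b => y l = false ∧ b (coordX l j) = true) =
      p * #{l | y l = false} := by
    rw [card_filter, Nat.cast_sum, mul_sum]
    refine sum_congr rfl fun l _ => ?_
    by_cases hy : y l = false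
    · simpa [hy, gtProb, coordX] using prodProb_coord_eq (p := gtProb p u q) (coordX l j) true
    · simp [hy, prodProb, prodExpect_const]
  rwa [hsum] at this

theorem prodProb_negCount_ge_threshold_le (hp : p ∈ Set.Icc 0 1) (hu : u ∈ Set.Icc 0 1)
    (hq : q ∈ Set.Icc 0 1) (hβ : 0 < 1 - (1 - u) * p) {g : ℝ} (hg : gamma0 p u = 1 - g)
    (hg0 : 0 < g) (hg1 : g ≤ 1) {i : Fin N} (hi : i ∈ Sd) :
    prodProb (gtProb p u q) (fun b : GTCoord M N → Bool =>
        M * p * negProb p u q #Sd * (1 - g / 2) ≤ negCount Sd b i) ≤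
      exp (-(M * p * negProb p u q #Sd * g ^ 2 / 16)) := by
  refine (prodProb_negCount_ge_le hp hu hq hi (by linarith : 0 ≤ g / 4) _).trans (exp_le_exp.2 ?_)
  rw [mul_negProb_pred hβ (card_ne_zero_of_mem hi), hg]
  have hR : 0 ≤ M * p * negProb p u q #Sd := by
    have := negProb_nonneg hp hu hq #Sd; have := hp.1; positivity
  have h1 : (exp (g / 4) - 1) * (M * ((1 - g) * (p * negProb p u q #Sd))) ≤
      (g / 4 + (g / 4) ^ 2) * ((1 - g) * (M * p * negProb p u q #Sd)) := by
    rw [show (M : ℝ) * ((1 - g) * (p * negProb p u q #Sd)) =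
      (1 - g) * (M * p * negProb p u q #Sd) by ring]
    exact mul_le_mul_of_nonneg_right (exp_sub_one_le_add_sq (by linarith) (by linarith))
      (mul_nonneg (by linarith) hR)
  nlinarith [mul_nonneg hR (pow_nonneg hg0.le 3)]

theorem prodProb_numNeg_lt_threshold_le (hp : p ∈ Set.Icc 0 1) (hu : u ∈ Set.Icc 0 1)
    (hq : q ∈ Set.Icc 0 1) {g : ℝ} (hg0 : 0 < g) (hg1 : g ≤ 1) :
    prodProb (gtProb p u q) (fun b : GTCoord M N → Bool =>
        (numNeg Sd b : ℝ) < M * negProb p u q #Sd * (1 - g / 8)) ≤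
      exp (-(M * negProb p u q #Sd * g ^ 2 / 256)) := by
  refine (prodProb_numNeg_lt_le hp hu hq (by linarith : 0 ≤ g / 16) _).trans (exp_le_exp.2 ?_)
  have hA : 0 ≤ M * negProb p u q #Sd := by have := negProb_nonneg hp hu hq #Sd; positivity
  nlinarith [mul_le_mul_of_nonneg_left
    (sub_sq_le_one_sub_exp_neg (by linarith : 0 ≤ g / 16) (by linarith)) hA]

theorem prodProb_colCount_lt_threshold_le (hp : p ∈ Set.Icc 0 1) (hu : u ∈ Set.Icc 0 1)
    (hq : q ∈ Set.Icc 0 1) {Γ g : ℝ} (hΓ : 0 ≤ Γ) (hg0 : 0 < g) (hg1 : g ≤ 1)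
    (y : Fin M → Bool) (hy : M * Γ * (1 - g / 8) ≤ #{l | y l = false}) (j : Fin N) :
    prodProb (gtProb p u q) (fun b =>
        (colCount y b j : ℝ) < M * p * Γ * (1 - g / 2)) ≤
      exp (-(9 / 256 * (M * p * Γ * g ^ 2))) := by
  refine (prodProb_colCount_lt_le hp hu hq y j (by linarith : 0 ≤ 3 * g / 16) _).trans
    (exp_le_exp.2 ?_)
  have ht : 0 ≤ 3 * g / 16 - (3 * g / 16) ^ 2 := by nlinarith
  have hexp := sub_sq_le_one_sub_exp_neg (x := 3 * g / 16) (by linarith) (by linarith)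
  have h1 : p * (3 * g / 16 - (3 * g / 16) ^ 2) * (M * Γ * (1 - g / 8)) ≤
      p * (1 - exp (-(3 * g / 16))) * #{l | y l = false} :=
    mul_le_mul (mul_le_mul_of_nonneg_left hexp hp.1) hy
      (mul_nonneg (mul_nonneg (Nat.cast_nonneg _) hΓ) (by linarith))
      (mul_nonneg hp.1 (ht.trans hexp))
  nlinarith [mul_nonneg (mul_nonneg (mul_nonneg (Nat.cast_nonneg M) hp.1) hΓ)
    (pow_nonneg hg0.le 3)]

end Tails

section Assembly

variable {M N : ℕ} {p u q : ℝ} {Sd : Finset (Fin N)}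

theorem negCount_eq_of_outcome_eq {b : GTCoord M N → Bool} {y : Fin M → Bool}
    (h : (fun l => outcome Sd b l) = y) (j : Fin N) : negCount Sd b j = colCount y b j := by
  subst h
  simp only [negCount, colCount, and_comm]

theorem prodProb_forall_negCount_lt_le (hp : p ∈ Set.Icc 0 1) (hu : u ∈ Set.Icc 0 1)
    (hq : q ∈ Set.Icc 0 1) {J : Finset (Fin N)} (hJ : Disjoint J Sd) {τ s c : ℝ} (hc : 0 ≤ c)
    (hcol : ∀ y : Fin M → Bool, s ≤ #{l | y l = false} → ∀ j ∈ J,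
      prodProb (gtProb p u q) (fun b => (colCount y b j : ℝ) < τ) ≤ c) :
    prodProb (gtProb p u q) (fun b : GTCoord M N → Bool =>
        (∀ j ∈ J, (negCount Sd b j : ℝ) < τ) ∧ s ≤ numNeg Sd b) ≤ c ^ #J := by
  have hP := gtProb_mem_Icc (M := M) (N := N) hp hu hq
  set cols : Set (GTCoord M N) := {t | ∃ l, ∃ j ∈ J, t = coordX l j}
  have hpat : ∀ y : Fin M → Bool,
      DependsOn (fun b => (fun l => outcome Sd b l) = y) colsᶜ := by
    intro y b b' h
    have hXSd : ∀ l, ∀ k ∈ Sd, coordX l k ∈ colsᶜ := fun l k hk ⟨l', j, hj, heq⟩ => by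
      simp only [coordX, Sum.inl.injEq, Prod.mk.injEq] at heq
      exact disjoint_left.1 hJ hj (heq.2 ▸ hk)
    beta_reduce
    rw [show (fun l => outcome Sd b l) = fun l => outcome Sd b' l from funext fun l =>
      dependsOn_outcome (fun k hk => ⟨by simp [cols, coordD, coordX], hXSd l k hk⟩)
        (by simp [cols, coordW, coordX]) h]
  have hcol_dep : ∀ y : Fin M → Bool, ∀ j ∈ J, DependsOn
      (fun b : GTCoord M N → Bool => (colCount y b j : ℝ) < τ)
      (Set.range (coordX · j)) := by
    intro y j _ b b' h
    simp only [colCount,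
      show ∀ l, b (coordX l j) = b' (coordX l j) from fun l => h _ ⟨l, rfl⟩]
  have hdisj : (J : Set (Fin N)).PairwiseDisjoint fun j => Set.range (coordX (M := M) · j) :=
    fun j _ j' _ hne => Set.disjoint_left.2 fun _ ⟨l, hl⟩ ⟨l', hl'⟩ => hne <| by
      rw [← hl'] at hl
      simp only [coordX, Sum.inl.injEq, Prod.mk.injEq] at hl
      exact hl.2
  -- Condition on the outcome pattern `y`: it does not read the columns of `J`, and given it the
  -- counts of the items of `J` are independent.
  calc prodProb (gtProb p u q)
        (fun b => (∀ j ∈ J, (negCount Sd b j : ℝ) < τ) ∧ s ≤ numNeg Sd b)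
      ≤ prodProb (gtProb p u q) (fun b => ∃ y ∈ ({y | s ≤ #{l | y l = false}} : Finset _),
          (fun l => outcome Sd b l) = y ∧ ∀ j ∈ J, (colCount y b j : ℝ) < τ) :=
        prodProb_mono hP fun b ⟨hz, hs⟩ => ⟨_, by simpa [numNeg] using hs, rfl, fun j hj => by
          simpa [negCount_eq_of_outcome_eq rfl] using hz j hj⟩
    _ ≤ ∑ y ∈ ({y | s ≤ #{l | y l = false}} : Finset _),
          prodProb (gtProb p u q) (fun b => (fun l => outcome Sd b l) = y ∧
            ∀ j ∈ J, (colCount y b j : ℝ) < τ) :=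
        prodProb_exists_le hP _ _
    _ ≤ ∑ y ∈ ({y | s ≤ #{l | y l = false}} : Finset _),
          prodProb (gtProb p u q) (fun b => (fun l => outcome Sd b l) = y) * c ^ #J := by
        refine sum_le_sum fun y hy => ?_
        rw [prodProb_and_of_dependsOn (hpat y) ?_, prodProb_forall_of_dependsOn hdisj (hcol_dep y)]
        · refine mul_le_mul_of_nonneg_left ?_ (prodProb_nonneg hP _)
          rw [← prod_const]
          exact prod_le_prod (fun j _ => prodProb_nonneg hP _)
            fun j hj => hcol y (by simpa using hy) j hj
        · intro b b' h
          have hb : ∀ j ∈ J, ∀ l, b (coordX l j) = b' (coordX l j) := fun j hj l =>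
            h _ (by simpa [cols] using ⟨l, j, hj, rfl⟩)
          exact propext (forall₂_congr fun j hj => by simp only [colCount, hb j hj])
    _ ≤ ∑ y, prodProb (gtProb p u q) (fun b => (fun l => outcome Sd b l) = y) * c ^ #J :=
        sum_le_sum_of_subset_of_nonneg (subset_univ _) fun y _ _ =>
          mul_nonneg (prodProb_nonneg hP _) (pow_nonneg hc _)
    _ = c ^ #J := by rw [← sum_mul, sum_prodProb_eq_one, one_mul]

theorem exists_of_not_roalSuccess {b : GTCoord M N → Bool} {L : ℕ} (τ : ℝ)
    (h : ¬ roalSuccess Sd L b) :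
    (∃ i ∈ Sd, τ ≤ negCount Sd b i) ∨
      ∃ J ∈ powersetCard (#Sdᶜ - (L - 1)) Sdᶜ,
        ∀ j ∈ J, (negCount Sd b j : ℝ) < τ := by
  by_contra! hcon
  obtain ⟨hdef, hJ⟩ := hcon
  refine h fun i hi => ?_
  have hbad : #{j ∈ Sdᶜ | (negCount Sd b j : ℝ) < τ} < #Sdᶜ - (L - 1) := by
    by_contra! hle
    obtain ⟨J, hJsub, hJcard⟩ := exists_subset_card_eq hle
    obtain ⟨j, hj, hjτ⟩ :=
      hJ J (mem_powersetCard.2 ⟨hJsub.trans (filter_subset _ _), hJcard⟩)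
    exact (not_lt.2 hjτ) (mem_filter.1 (hJsub hj)).2
  have hgood := card_filter_add_card_filter_not (s := Sdᶜ) fun j => (negCount Sd b j : ℝ) < τ
  calc L ≤ #{j ∈ Sdᶜ | ¬ (negCount Sd b j : ℝ) < τ} := by omega
    _ ≤ #{j | j ∉ Sd ∧ negCount Sd b i < negCount Sd b j} := card_le_card fun j hj => by
        simp only [mem_filter, mem_compl, mem_univ, true_and] at hj ⊢
        exact ⟨hj.1, by exact_mod_cast (hdef i hi).trans_le (not_lt.1 hj.2)⟩

theorem prodProb_not_roalSuccess_le {P : GTCoord M N → ℝ} (hP : ∀ t, P t ∈ Set.Icc 0 1)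
    (L : ℕ) (τ s : ℝ) :
    prodProb P (fun b => ¬ roalSuccess Sd L b) ≤
      prodProb P (fun b => ∃ i ∈ Sd, τ ≤ negCount Sd b i) +
      prodProb P (fun b => (numNeg Sd b : ℝ) < s) +
      prodProb P (fun b => ∃ J ∈ powersetCard (#Sdᶜ - (L - 1)) Sdᶜ,
        (∀ j ∈ J, (negCount Sd b j : ℝ) < τ) ∧ s ≤ numNeg Sd b) := by
  have h := prodProb_mono hP (A := fun b => ¬ roalSuccess Sd L b)
    (B := fun b => ((∃ i ∈ Sd, τ ≤ negCount Sd b i) ∨ (numNeg Sd b : ℝ) < s) ∨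
      ∃ J ∈ powersetCard (#Sdᶜ - (L - 1)) Sdᶜ,
        (∀ j ∈ J, (negCount Sd b j : ℝ) < τ) ∧ s ≤ numNeg Sd b) fun b hb => by
    rcases exists_of_not_roalSuccess τ hb with h | ⟨J, hJ, hz⟩
    · exact Or.inl (Or.inl h)
    · by_cases hs : (numNeg Sd b : ℝ) < s
      · exact Or.inl (Or.inr hs)
      · exact Or.inr ⟨J, hJ, hz, not_lt.1 hs⟩
  linarith [prodProb_or_le hP (fun b => (∃ i ∈ Sd, τ ≤ negCount Sd b i) ∨
    (numNeg Sd b : ℝ) < s) fun b => ∃ J ∈ powersetCard (#Sdᶜ - (L - 1)) Sdᶜ,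
      (∀ j ∈ J, (negCount Sd b j : ℝ) < τ) ∧ s ≤ numNeg Sd b,
    prodProb_or_le hP (fun b => ∃ i ∈ Sd, τ ≤ negCount Sd b i)
      fun b => (numNeg Sd b : ℝ) < s]

theorem prodProb_roalSuccess_ge (hp : p ∈ Set.Icc 0 1) (hu : u ∈ Set.Icc 0 1)
    (hq : q ∈ Set.Icc 0 1) (hβ : 0 < 1 - (1 - u) * p) {g : ℝ} (hg : gamma0 p u = 1 - g)
    (hg0 : 0 < g) (hg1 : g ≤ 1) {L : ℕ} (hLn : L - 1 ≤ #Sdᶜ) :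
    1 - (#Sd * exp (-(M * p * negProb p u q #Sd * g ^ 2 / 16)) +
        exp (-(M * p * negProb p u q #Sd * g ^ 2 / 256)) +
        (#Sdᶜ).choose (L - 1) * exp (-(9 / 256 * (M * p * negProb p u q #Sd * g ^ 2))) ^
          (#Sdᶜ - (L - 1))) ≤
      prodProb (gtProb p u q) (roalSuccess (M := M) Sd L) := by
  set P : GTCoord M N → ℝ := gtProb p u q
  have hP : ∀ t, P t ∈ Set.Icc 0 1 := gtProb_mem_Icc hp hu hq
  set Γ := negProb p u q #Sd
  have hΓ : 0 ≤ Γ := negProb_nonneg hp hu hq _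
  have hfail := prodProb_not_roalSuccess_le (Sd := Sd) hP L (M * p * Γ * (1 - g / 2))
    (M * Γ * (1 - g / 8))
  have hdef : prodProb P (fun b => ∃ i ∈ Sd, M * p * Γ * (1 - g / 2) ≤ negCount Sd b i)
      ≤ #Sd * exp (-(M * p * Γ * g ^ 2 / 16)) :=
    (prodProb_exists_le hP _ _).trans <| (sum_le_sum fun i hi =>
      prodProb_negCount_ge_threshold_le hp hu hq hβ hg hg0 hg1 hi).trans_eq (by simp [Γ])
  have hneg : prodProb P (fun b => (numNeg Sd b : ℝ) < M * Γ * (1 - g / 8))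
      ≤ exp (-(M * p * Γ * g ^ 2 / 256)) :=
    (prodProb_numNeg_lt_threshold_le hp hu hq hg0 hg1).trans <| exp_le_exp.2 <| by
      have : 0 ≤ M * Γ * g ^ 2 := by positivity
      nlinarith [hp.2]
  have hnondef : prodProb P (fun b => ∃ J ∈ powersetCard (#Sdᶜ - (L - 1)) Sdᶜ,
        (∀ j ∈ J, (negCount Sd b j : ℝ) < M * p * Γ * (1 - g / 2)) ∧
          M * Γ * (1 - g / 8) ≤ numNeg Sd b)
      ≤ (#Sdᶜ).choose (L - 1) *
          exp (-(9 / 256 * (M * p * Γ * g ^ 2))) ^ (#Sdᶜ - (L - 1)) := by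
    refine (prodProb_exists_le hP _ _).trans <| (sum_le_sum fun J hJ => ?_).trans (by
      rw [sum_const, card_powersetCard, nsmul_eq_mul, Nat.choose_symm hLn])
    obtain ⟨hJsub, hJcard⟩ := mem_powersetCard.1 hJ
    rw [← hJcard]
    exact prodProb_forall_negCount_lt_le hp hu hq
      (disjoint_of_subset_left hJsub disjoint_compl_left) (by positivity)
      fun y hy j _ => prodProb_colCount_lt_threshold_le hp hu hq hΓ hg0 hg1 y hy j
  rw [prodProb_not] at hfail
  linarith

end Assembly

theorem inv_mul_mem_Icc {u : ℝ} {K : ℕ} (hK : 2 ≤ K) (hu : u ≤ 1 / 2) :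
    1 / ((1 - u) * K) ∈ Set.Icc (0 : ℝ) 1 := by
  have hKR : (2 : ℝ) ≤ K := by exact_mod_cast hK
  exact ⟨div_nonneg zero_le_one (mul_nonneg (by linarith) (by positivity)), by
    rw [div_le_one (by nlinarith)]; nlinarith⟩

theorem one_sub_mul_inv_mul {u : ℝ} {K : ℕ} (hu : u ≠ 1) (hK : K ≠ 0) :
    1 - (1 - u) * (1 / ((1 - u) * K)) = (K - 1) / K := by
  have : (1 : ℝ) - u ≠ 0 := sub_ne_zero.2 hu.symm
  field_simp

theorem gamma0_inv_mul {u : ℝ} {K : ℕ} (hu : u ≠ 1) (hK : K ≠ 0) :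
    gamma0 (1 / ((1 - u) * K)) u = u * K / (K - 1) := by
  rw [gamma0, one_sub_mul_inv_mul hu hK, div_div_eq_mul_div]

theorem quarter_le_one_sub_inv_pow {K : ℕ} (hK : 2 ≤ K) :
    (1 / 4 : ℝ) ≤ (1 - 1 / K) ^ K := by
  have hKR : (2 : ℝ) ≤ K := by exact_mod_cast hK
  have hx : 0 ≤ 1 - 1 / (K : ℝ) := by
    rw [sub_nonneg, div_le_one (by linarith)]; linarith
  have hbern := one_add_mul_self_le_rpow_one_add (s := -(1 / K)) (by
    rw [neg_le_neg_iff, div_le_one (by linarith)]; linarith) (p := K / 2) (by linarith)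
  have hsq : ((1 - 1 / (K : ℝ)) ^ ((K : ℝ) / 2)) ^ 2 = (1 - 1 / (K : ℝ)) ^ K := by
    rw [← Real.rpow_mul_natCast hx, ← Real.rpow_natCast]
    norm_num
  have hhalf : (1 : ℝ) / 2 = 1 + (K : ℝ) / 2 * -(1 / K) := by field_simp; ring
  rw [← hhalf, ← sub_eq_add_neg] at hbern
  rw [← hsq]
  nlinarith

theorem roal_error_terms_le {c0 ρ : ℝ} {K C m : ℕ} (hc0 : 0 < c0) (hK : 2 ≤ K) (hC : 1 ≤ C)
    (hm : 1 ≤ m)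
    (hρ : (1 + c0) * (128 * log (K * C) / m + 2048 * log K) * (1 - 1 / K) ^ K ≤ ρ) :
    K * exp (-(ρ / 16)) + exp (-(ρ / 256)) + C * exp (-(9 / 256 * ρ)) ^ m ≤
      exp (-(c0 * log (K * C))) + exp (-(c0 * log K)) := by
  have hKR : (2 : ℝ) ≤ K := by exact_mod_cast hK
  have hCR : (1 : ℝ) ≤ C := by exact_mod_cast hC
  have hmR : (1 : ℝ) ≤ m := by exact_mod_cast hm
  have hlog2 : 0 < log 2 := log_pos one_lt_two
  have hlogK : log 2 ≤ log K := log_le_log two_pos hKR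
  have hlogC : log C ≤ log (K * C) := log_le_log (by positivity) (by nlinarith)
  have hlogKC : log K ≤ log (K * C) := log_le_log (by positivity) (by nlinarith)
  have hLC : 0 ≤ (1 + c0) * (log (K * C) / m) :=
    mul_nonneg (by linarith) (div_nonneg (by linarith) (Nat.cast_nonneg m))
  replace hρ : (1 + c0) * (128 * log (K * C) / m + 2048 * log K) / 4 ≤ ρ := by
    have hX : 0 ≤ (1 + c0) * (128 * log (K * C) / m + 2048 * log K) :=
      mul_nonneg (by linarith) (add_nonneg (div_nonneg (by linarith) (Nat.cast_nonneg m))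
        (by linarith))
    nlinarith [quarter_le_one_sub_inv_pow hK]
  have hρK : 512 * (1 + c0) * log K ≤ ρ := by
    have : (1 + c0) * (128 * log (K * C) / m + 2048 * log K) / 4 =
        32 * ((1 + c0) * (log (K * C) / m)) + 512 * (1 + c0) * log K := by ring
    linarith
  have hρC : 32 * (1 + c0) * log (K * C) ≤ m * ρ := by
    have hmρ := mul_le_mul_of_nonneg_left hρ (Nat.cast_nonneg m)
    have : (m : ℝ) * ((1 + c0) * (128 * log (K * C) / m + 2048 * log K) / 4) =
        (1 + c0) * (32 * log (K * C) + 512 * m * log K) := by field_simp; ring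
    nlinarith [mul_nonneg (mul_nonneg (by linarith : 0 ≤ 1 + c0) (Nat.cast_nonneg m)) hlog2.le]
  have h1 : K * exp (-(ρ / 16)) ≤ exp (-(c0 * log K)) / 2 := by
    calc (K : ℝ) * exp (-(ρ / 16)) = exp (log K + -(ρ / 16)) := by
          rw [exp_add, exp_log (by positivity)]
      _ ≤ exp (-(c0 * log K) - log 2) := exp_le_exp.2 (by nlinarith)
      _ = exp (-(c0 * log K)) / 2 := by rw [exp_sub, exp_log two_pos]
  have h2 : exp (-(ρ / 256)) ≤ exp (-(c0 * log K)) / 2 := by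
    rw [← exp_log two_pos, ← exp_sub]
    exact exp_le_exp.2 (by nlinarith)
  have h3 : C * exp (-(9 / 256 * ρ)) ^ m ≤ exp (-(c0 * log (K * C))) := by
    calc (C : ℝ) * exp (-(9 / 256 * ρ)) ^ m = exp (log C + m * -(9 / 256 * ρ)) := by
          rw [exp_add, exp_log (by positivity), exp_nat_mul]
      _ ≤ _ := exp_le_exp.2 (by nlinarith)
  linarith

theorem exponent_ge_of_numTests_ge {c0 u q g X : ℝ} {M K : ℕ} (hK : 2 ≤ K) (hu : u < 1)
    (hq : q < 1) (hg : 0 < g) (hM : (1 + c0) * (K * (1 - u) / ((1 - q) * g ^ 2)) * X ≤ M) :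
    (1 + c0) * X * (1 - 1 / K) ^ K ≤
      M * (1 / ((1 - u) * K)) * negProb (1 / ((1 - u) * K)) u q K * g ^ 2 := by
  have hKR : (2 : ℝ) ≤ K := by exact_mod_cast hK
  have h1u : 0 < 1 - u := by linarith
  have h1q : 0 < 1 - q := by linarith
  have hβ : 1 - (1 - u) * (1 / ((1 - u) * K)) = 1 - 1 / K := by
    field_simp
  have hβ0 : (0 : ℝ) ≤ 1 - 1 / K := by rw [sub_nonneg, div_le_one (by linarith)]; linarith
  have hid : 1 / ((1 - u) * K) * negProb (1 / ((1 - u) * K)) u q K * g ^ 2 *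
      (K * (1 - u) / ((1 - q) * g ^ 2)) = (1 - 1 / K) ^ K := by
    rw [negProb, hβ]
    field_simp
  have hw : 0 ≤ 1 / ((1 - u) * K) * negProb (1 / ((1 - u) * K)) u q K * g ^ 2 := by
    rw [negProb, hβ]
    have := pow_nonneg hβ0 K
    positivity
  calc (1 + c0) * X * (1 - 1 / K) ^ K = (1 + c0) * (K * (1 - u) / ((1 - q) * g ^ 2)) * X *
          (1 / ((1 - u) * K) * negProb (1 / ((1 - u) * K)) u q K * g ^ 2) := by
        rw [← hid]; ring
    _ ≤ M * (1 / ((1 - u) * K) * negProb (1 / ((1 - u) * K)) u q K * g ^ 2) :=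
        mul_le_mul_of_nonneg_right hM hw
    _ = _ := by ring

end GroupTesting

open GroupTesting in
/-- Theorem 1, RoAl: with `p = 1/((1−u)K)` and
`z(i) = Σ_l X_{li}(1−Y_l)` (the number of negative tests containing item `i`),
for every `c0 > 0` there are constants `Ca1, Ca2 > 0` not depending on `N, L, K` such
that if `M ≥ (1+c0)·[K(1−u)/((1−q)(1−γ0)²)]·(Ca1·log(K·C(N−K,L−1))/((N−K)−(L−1)) + Ca2·log K)`
then, with probability at least
`1 − exp(−c0 log(K·C(N−K,L−1))) − exp(−c0 log K)`, every defective item `i` has at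
least `L` non-defective items `j` with `z(j) > z(i)`. Here `γ0 = uK/(K−1)`. -/
theorem stmt_8 (c0 : ℝ) (hc0 : 0 < c0) :
    ∃ Ca1 Ca2 : ℝ, 0 < Ca1 ∧ 0 < Ca2 ∧
      ∀ (Ω : Type) [MeasureSpace Ω] [IsProbabilityMeasure (ℙ : Measure Ω)]
        (M N K L : ℕ) (u q : ℝ)
        (Sd : Finset (Fin N)) (G : GTModel Ω M N (1 / ((1 - u) * K)) u q),
        2 ≤ K → K < N → 1 ≤ L → L ≤ N - K → 1 ≤ M →
        0 ≤ u → u < 1 / 2 → 0 ≤ q → q < 1 / 2 → Sd.card = K →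
        (1 + c0) * ((K : ℝ) * (1 - u) /
            ((1 - q) * (1 - u * K / ((K : ℝ) - 1)) ^ 2)) *
          (Ca1 * Real.log ((K : ℝ) * ((N - K).choose (L - 1) : ℝ))
              / (((N - K) - (L - 1) : ℕ) : ℝ)
            + Ca2 * Real.log (K : ℝ)) ≤ (M : ℝ) →
        ENNReal.ofReal
            (1 - Real.exp (-(c0 * Real.log ((K : ℝ) * ((N - K).choose (L - 1) : ℝ))))
              - Real.exp (-(c0 * Real.log (K : ℝ)))) ≤
          (ℙ : Measure Ω) {ω | ∀ i ∈ Sd,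
            L ≤ (Finset.univ.filter fun j : Fin N =>
                j ∉ Sd ∧
                (Finset.univ.filter fun l : Fin M =>
                    G.X l i ω = true ∧ G.Y Sd l ω = false).card <
                (Finset.univ.filter fun l : Fin M =>
                    G.X l j ω = true ∧ G.Y Sd l ω = false).card).card} := by
  refine ⟨128, 2048, by norm_num, by norm_num, ?_⟩
  intro Ω _ _ M N K L u q Sd G hK hKN hL1 hLNK _ hu0 hu2 hq0 hq2 hSd hM
  have hKR : (2 : ℝ) ≤ K := by exact_mod_cast hK
  have hu1 : u ≠ 1 := by linarith
  have hK0 : K ≠ 0 := by omega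
  have hγ0 : 0 ≤ u * K / (K - 1) := div_nonneg (by positivity) (by linarith)
  have hγ1 : u * K / (K - 1) < 1 := by rw [div_lt_one (by linarith)]; nlinarith
  have hSdc : #Sdᶜ = N - K := by rw [card_compl, Fintype.card_fin, hSd]
  have hp := inv_mul_mem_Icc hK hu2.le
  change _ ≤ (ℙ : Measure Ω) {ω | roalSuccess Sd L (G.sample ω)}
  rw [G.measure_setOf_sample_eq hp ⟨hu0, by linarith⟩ ⟨hq0, by linarith⟩]
  refine ENNReal.ofReal_le_ofReal (le_trans ?_ (prodProb_roalSuccess_ge hp ⟨hu0, by linarith⟩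
    ⟨hq0, by linarith⟩
    (by rw [one_sub_mul_inv_mul hu1 hK0]; exact div_pos (by linarith) (by linarith))
    (g := 1 - u * K / (K - 1)) (by rw [gamma0_inv_mul hu1 hK0]; ring) (by linarith) (by linarith)
    (by rw [hSdc]; omega)))
  have hρ := exponent_ge_of_numTests_ge hK (by linarith) (by linarith) (by linarith) hM
  rw [hSd, hSdc]
  linarith [roal_error_terms_le hc0 hK (Nat.choose_pos (by omega)) (by omega) hρ]
end

section
/- (Proposition: sufficiency condition for RoLpAl.) Let N, L, m be integers with 1 ≤ L ≤ N, let A ∈ {0,1}^{m×N}, and let (z, λ1, λ2, ν) with z, λ1, λ2 ∈ ℝ^N, ν ∈ ℝ be a KKT point of LP0a for (A, L). Let Ŝ_L ⊆ {1,...,N} with |Ŝ_L| = L satisfy z(i) ≤ z(j) for every i ∈ Ŝ_L and j ∉ Ŝ_L (i.e. Ŝ_L indexes L smallest entries of z). Then λ2(i) = 0 for every i ∈ Ŝ_L; consequently, for any set S_d ⊆ {1,...,N}, if λ2(i) > 0 for all i ∈ S_d, then Ŝ_L ∩ S_d = ∅. -/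
/-!
If some `i` among the `L` smallest entries of `z` had `λ2(i) > 0`, complementary slackness would
force `z(i) = 1`, hence `z = 1` off `Ŝ_L` as well. Then `Σ z ≥ (N - L) + 1`, so the coupling
constraint is slack and `ν = 0`; also `λ1(i) = 0` because `z(i) ≠ 0`. Stationarity at `i` then
reads `Σ_l A_{li} + λ2(i) = 0`, which forces `λ2(i) = 0`.
-/

/-- A KKT point of the linear program **LP0a** for data `(A, L)`:
minimize `Σ_{l,k} A_{lk} z(k)` subject to `0 ≤ z(k) ≤ 1` for all `k` and
`Σ_k z(k) ≥ N−L`; `l1, l2, ν` are the dual variables of the constraints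
`z ≥ 0`, `z ≤ 1` and `Σ_k z(k) ≥ N−L` respectively. -/
structure KKT0a (m N L : ℕ) (A : Fin m → Fin N → Bool)
    (z l1 l2 : Fin N → ℝ) (ν : ℝ) : Prop where
  grad : ∀ k, (∑ l : Fin m, (if A l k then (1 : ℝ) else 0)) - l1 k + l2 k - ν = 0
  cs1 : ∀ k, l1 k * z k = 0
  cs2 : ∀ k, l2 k * (z k - 1) = 0
  csnu : ν * ((∑ k : Fin N, z k) - ((N : ℝ) - L)) = 0
  z_nonneg : ∀ k, 0 ≤ z k
  z_le_one : ∀ k, z k ≤ 1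
  sum_z : (N : ℝ) - L ≤ ∑ k : Fin N, z k
  l1_nonneg : ∀ k, 0 ≤ l1 k
  l2_nonneg : ∀ k, 0 ≤ l2 k
  nu_nonneg : 0 ≤ ν

theorem Finset.card_le_sum_of_eq_one {ι : Type*} [Fintype ι] {f : ι → ℝ} (hf : ∀ k, 0 ≤ f k)
    {t : Finset ι} (ht : ∀ j ∈ t, f j = 1) : (t.card : ℝ) ≤ ∑ k, f k :=
  calc (t.card : ℝ) = ∑ k ∈ t, f k := by rw [Finset.sum_congr rfl ht, Finset.sum_const, nsmul_one]
    _ ≤ ∑ k, f k := Finset.sum_le_univ_sum_of_nonneg hf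

namespace KKT0a

variable {m N L : ℕ} {A : Fin m → Fin N → Bool} {z l1 l2 : Fin N → ℝ} {ν : ℝ}

theorem z_eq_one_of_l2_ne_zero (h : KKT0a m N L A z l1 l2 ν) {k : Fin N} (hk : l2 k ≠ 0) :
    z k = 1 :=
  sub_eq_zero.1 <| (mul_eq_zero.1 (h.cs2 k)).resolve_left hk

theorem l1_eq_zero_of_z_ne_zero (h : KKT0a m N L A z l1 l2 ν) {k : Fin N} (hk : z k ≠ 0) :
    l1 k = 0 :=
  (mul_eq_zero.1 (h.cs1 k)).resolve_right hk

theorem nu_eq_zero_of_lt_sum (h : KKT0a m N L A z l1 l2 ν)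
    (hlt : (N : ℝ) - L < ∑ k, z k) : ν = 0 :=
  (mul_eq_zero.1 h.csnu).resolve_right (sub_ne_zero.2 hlt.ne')

theorem l2_eq_zero_of_nu_eq_zero (h : KKT0a m N L A z l1 l2 ν) (hν : ν = 0) {k : Fin N}
    (hk : z k ≠ 0) : l2 k = 0 := by
  have hA : 0 ≤ ∑ l : Fin m, (if A l k then (1 : ℝ) else 0) :=
    Finset.sum_nonneg fun l _ => by positivity
  have hgrad := h.grad k
  rw [h.l1_eq_zero_of_z_ne_zero hk, hν] at hgrad
  linarith [h.l2_nonneg k]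

theorem l2_eq_zero_of_mem_smallest (h : KKT0a m N L A z l1 l2 ν) {SL : Finset (Fin N)}
    (hSL : SL.card = L) (hmin : ∀ i ∈ SL, ∀ j ∉ SL, z i ≤ z j) {i : Fin N} (hi : i ∈ SL) :
    l2 i = 0 := by
  by_contra hne
  have hzi : z i = 1 := h.z_eq_one_of_l2_ne_zero hne
  have hone : ∀ j ∈ insert i SLᶜ, z j = 1 := by
    simp only [Finset.mem_insert, Finset.mem_compl]
    rintro j (rfl | hj)
    · exact hzi
    · exact le_antisymm (h.z_le_one j) (hzi ▸ hmin i hi j hj)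
  have hcard : ((insert i SLᶜ).card : ℝ) = N - L + 1 := by
    rw [Finset.card_insert_of_notMem (by simpa using hi), Finset.card_compl,
      Nat.cast_add_one, Nat.cast_sub (Finset.card_le_univ SL), Fintype.card_fin, hSL]
  have hlt : (N : ℝ) - L < ∑ k, z k := by
    linarith [Finset.card_le_sum_of_eq_one h.z_nonneg hone]
  exact hne <| h.l2_eq_zero_of_nu_eq_zero (h.nu_eq_zero_of_lt_sum hlt) (by simp [hzi])

end KKT0a

theorem stmt_11_general (N L m : ℕ)
    (A : Fin m → Fin N → Bool) (z l1 l2 : Fin N → ℝ) (ν : ℝ)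
    (hKKT : KKT0a m N L A z l1 l2 ν)
    (SL : Finset (Fin N)) (hSL : SL.card = L)
    (hmin : ∀ i ∈ SL, ∀ j ∉ SL, z i ≤ z j) :
    (∀ i ∈ SL, l2 i = 0) ∧
      ∀ Sd : Finset (Fin N), (∀ i ∈ Sd, 0 < l2 i) → SL ∩ Sd = ∅ := by
  have hzero : ∀ i ∈ SL, l2 i = 0 := fun i hi => hKKT.l2_eq_zero_of_mem_smallest hSL hmin hi
  refine ⟨hzero, fun Sd hSd => Finset.eq_empty_of_forall_notMem fun i hi => ?_⟩
  rw [Finset.mem_inter] at hi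
  exact (hSd i hi.2).ne' (hzero i hi.1)

/-- sufficiency condition for RoLpAl: at a KKT point of LP0a, if `Ŝ_L`
indexes `L` smallest entries of `z`, then `λ2(i) = 0` for every `i ∈ Ŝ_L`;
consequently, for any `S_d`, if `λ2(i) > 0` for all `i ∈ S_d`, then `Ŝ_L ∩ S_d = ∅`. -/
theorem stmt_11 (N L m : ℕ) (hL1 : 1 ≤ L) (hLN : L ≤ N)
    (A : Fin m → Fin N → Bool) (z l1 l2 : Fin N → ℝ) (ν : ℝ)
    (hKKT : KKT0a m N L A z l1 l2 ν)
    (SL : Finset (Fin N)) (hSL : SL.card = L)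
    (hmin : ∀ i ∈ SL, ∀ j ∉ SL, z i ≤ z j) :
    (∀ i ∈ SL, l2 i = 0) ∧
      ∀ Sd : Finset (Fin N), (∀ i ∈ Sd, 0 < l2 i) → SL ∩ Sd = ∅ :=
  stmt_11_general N L m A z l1 l2 ν hKKT SL hSL hmin
end

section
/- (Proposition: deterministic error-event characterization for RoLpAl.) Let N, K, L, m be integers with 1 ≤ K < N, 1 ≤ L ≤ N−K, let S_d ⊆ {1,...,N} with |S_d| = K, and let A ∈ {0,1}^{m×N}. Suppose (z, λ1, λ2, ν) is a KKT point of LP0a for (A, L) and Ŝ_L ⊆ {1,...,N} with |Ŝ_L| = L satisfies z(i) ≤ z(j) for every i ∈ Ŝ_L and j ∉ Ŝ_L. If Ŝ_L ∩ S_d ≠ ∅, then there exist a defective item i ∈ S_d and a set S_z ⊆ {1,...,N}∖S_d with |S_z| = (N−K)−(L−1) such that Σ_{l=1}^m A_{li} ≥ Σ_{l=1}^m A_{lj} for every j ∈ S_z. -/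
/-- deterministic error-event characterization for RoLpAl: at a KKT point
of LP0a, if the set `Ŝ_L` of `L` smallest entries of `z` contains a defective item,
then some defective item `i ∈ S_d` and some set `S_z` of `(N−K)−(L−1)` non-defective
items satisfy `Σ_l A_{li} ≥ Σ_l A_{lj}` for every `j ∈ S_z`. -/
theorem stmt_13 (N K L m : ℕ) (hK1 : 1 ≤ K) (hKN : K < N) (hL1 : 1 ≤ L) (hL : L ≤ N - K)
    (Sd : Finset (Fin N)) (hSd : Sd.card = K)
    (A : Fin m → Fin N → Bool) (z l1 l2 : Fin N → ℝ) (ν : ℝ)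
    (hKKT : KKT0a m N L A z l1 l2 ν)
    (SL : Finset (Fin N)) (hSL : SL.card = L)
    (hmin : ∀ i ∈ SL, ∀ j ∉ SL, z i ≤ z j)
    (hbad : (SL ∩ Sd).Nonempty) :
    ∃ i ∈ Sd, ∃ Sz : Finset (Fin N), (∀ j ∈ Sz, j ∉ Sd) ∧
      Sz.card = (N - K) - (L - 1) ∧
      ∀ j ∈ Sz, (∑ l : Fin m, (if A l j then (1 : ℝ) else 0))
        ≤ ∑ l : Fin m, (if A l i then (1 : ℝ) else 0) := by
  classical
  obtain ⟨i, hi⟩ := hbad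
  rw [Finset.mem_inter] at hi
  obtain ⟨hiSL, hiSd⟩ := hi
  have hKLN : K + L ≤ N := by omega
  set c : Fin N → ℝ := fun k => ∑ l : Fin m, (if A l k then (1:ℝ) else 0) with hcdef
  have hc_nonneg : ∀ k, 0 ≤ c k := fun k =>
    Finset.sum_nonneg (fun l _ => by positivity)
  have hle : ∀ k, 0 < z k → c k ≤ ν := by
    intro k hk
    have h1 : l1 k = 0 := by
      rcases mul_eq_zero.mp (hKKT.cs1 k) with h | h
      · exact h
      · exact absurd h (ne_of_gt hk)
    have hg := hKKT.grad k
    have h2 := hKKT.l2_nonneg k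
    simp only [hcdef]
    linarith
  have hgi : ν ≤ c i := by
    by_cases h1 : z i < 1
    · have h2 : l2 i = 0 := by
        rcases mul_eq_zero.mp (hKKT.cs2 i) with h | h
        · exact h
        · exact absurd h (by intro h'; linarith [sub_eq_zero.mp h'])
      have hg := hKKT.grad i
      have h3 := hKKT.l1_nonneg i
      simp only [hcdef]
      linarith
    · push_neg at h1
      have hzi : z i = 1 := le_antisymm (hKKT.z_le_one i) h1
      have hnu : ν = 0 := by
        have hsplit : ∑ k : Fin N, z k = ∑ k ∈ SL, z k + ∑ k ∈ SLᶜ, z k := by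
          rw [Finset.sum_add_sum_compl]
        have hSL1 : z i ≤ ∑ k ∈ SL, z k :=
          Finset.single_le_sum (fun k _ => hKKT.z_nonneg k) hiSL
        have hSLc : (SLᶜ.card : ℝ) ≤ ∑ k ∈ SLᶜ, z k := by
          calc (SLᶜ.card : ℝ) = ∑ k ∈ SLᶜ, (1:ℝ) := by simp
          _ ≤ ∑ k ∈ SLᶜ, z k := by
              apply Finset.sum_le_sum
              intro j hj
              have := hmin i hiSL j (Finset.mem_compl.mp hj)
              linarith
        have hcard : (SLᶜ.card : ℝ) = (N : ℝ) - L := by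
          rw [Finset.card_compl, hSL]
          simp only [Fintype.card_fin]
          push_cast [Nat.cast_sub (by omega : L ≤ N)]
          ring
        have hsum : (N:ℝ) - L + 1 ≤ ∑ k : Fin N, z k := by
          rw [hsplit]; rw [hcard] at hSLc; linarith
        rcases mul_eq_zero.mp hKKT.csnu with h | h
        · exact h
        · linarith [sub_eq_zero.mp h]
      rw [hnu]; exact hc_nonneg i
  -- the set of non-defective items with positive z
  set T : Finset (Fin N) := Finset.univ.filter (fun j => j ∉ Sd ∧ 0 < z j) with hTdef
  have hTmem : ∀ j, j ∈ T ↔ (j ∉ Sd ∧ 0 < z j) := by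
    intro j; simp [hTdef]
  have hTcard : (N - K) - (L - 1) ≤ T.card := by
    by_cases hzi : 0 < z i
    · -- T ⊇ Sdᶜ \ SL
      have hsub : Sdᶜ \ SL ⊆ T := by
        intro j hj
        rw [Finset.mem_sdiff, Finset.mem_compl] at hj
        rw [hTmem]
        exact ⟨hj.1, lt_of_lt_of_le hzi (hmin i hiSL j hj.2)⟩
      have h1 : (Sdᶜ \ SL).card + (Sdᶜ ∩ SL).card = Sdᶜ.card :=
        Finset.card_sdiff_add_card_inter _ _
      have h2 : (Sdᶜ ∩ SL).card ≤ L - 1 := by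
        have : Sdᶜ ∩ SL ⊆ SL.erase i := by
          intro j hj
          rw [Finset.mem_inter, Finset.mem_compl] at hj
          rw [Finset.mem_erase]
          exact ⟨fun h => hj.1 (h ▸ hiSd), hj.2⟩
        calc (Sdᶜ ∩ SL).card ≤ (SL.erase i).card := Finset.card_le_card this
        _ = L - 1 := by rw [Finset.card_erase_of_mem hiSL, hSL]
      have h3 : Sdᶜ.card = N - K := by
        rw [Finset.card_compl, hSd]; simp
      have h4 := Finset.card_le_card hsub
      omega
    · -- z i = 0
      have hzi0 : z i = 0 := le_antisymm (not_lt.mp hzi) (hKKT.z_nonneg i)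
      set P : Finset (Fin N) := Finset.univ.filter (fun j => 0 < z j) with hPdef
      have hPcard : N - L ≤ P.card := by
        have h1 : ∑ k : Fin N, z k ≤ (P.card : ℝ) := by
          have hsplit : ∑ k : Fin N, z k = ∑ k ∈ P, z k + ∑ k ∈ Pᶜ, z k := by
            rw [Finset.sum_add_sum_compl]
          have h2 : ∑ k ∈ Pᶜ, z k = 0 := by
            apply Finset.sum_eq_zero
            intro j hj
            rw [Finset.mem_compl, hPdef] at hj
            simp only [Finset.mem_filter, Finset.mem_univ, true_and, not_lt] at hj
            linarith [hKKT.z_nonneg j]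
          have h3 : ∑ k ∈ P, z k ≤ (P.card : ℝ) := by
            calc ∑ k ∈ P, z k ≤ ∑ k ∈ P, (1:ℝ) :=
              Finset.sum_le_sum (fun k _ => hKKT.z_le_one k)
            _ = P.card := by simp
          rw [hsplit, h2]; linarith
        have h4 : ((N - L : ℕ) : ℝ) ≤ (P.card : ℝ) := by
          push_cast [Nat.cast_sub (by omega : L ≤ N)]
          linarith [hKKT.sum_z]
        exact_mod_cast h4
      have hsub : P \ Sd ⊆ T := by
        intro j hj
        rw [Finset.mem_sdiff, hPdef] at hj
        simp only [Finset.mem_filter, Finset.mem_univ, true_and] at hj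
        rw [hTmem]
        exact ⟨hj.2, hj.1⟩
      have h1 : (P \ Sd).card + (P ∩ Sd).card = P.card :=
        Finset.card_sdiff_add_card_inter _ _
      have h2 : (P ∩ Sd).card ≤ K - 1 := by
        have hs : P ∩ Sd ⊆ Sd.erase i := by
          intro j hj
          rw [Finset.mem_inter, hPdef] at hj
          simp only [Finset.mem_filter, Finset.mem_univ, true_and] at hj
          rw [Finset.mem_erase]
          refine ⟨fun h => ?_, hj.2⟩
          rw [h] at hj
          exact absurd hzi0 (ne_of_gt hj.1)
        calc (P ∩ Sd).card ≤ (Sd.erase i).card := Finset.card_le_card hs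
        _ = K - 1 := by rw [Finset.card_erase_of_mem hiSd, hSd]
      have h4 := Finset.card_le_card hsub
      omega
  obtain ⟨Sz, hSzT, hSzcard⟩ := Finset.exists_subset_card_eq hTcard
  refine ⟨i, hiSd, Sz, ?_, hSzcard, ?_⟩
  · intro j hj
    exact ((hTmem j).mp (hSzT hj)).1
  · intro j hj
    have hjT := (hTmem j).mp (hSzT hj)
    exact le_trans (hle j hjT.2) hgi
end

section
/- (Deterministic error characterization for CoLpAl, case λ2(i) > 0.) Let N, K, L be integers with 1 ≤ K < N and 1 ≤ L ≤ N−K, let S_d ⊆ {1,...,N} with |S_d| = K, let A ∈ {0,1}^{m_z×N} and B ∈ {0,1}^{m_p×N}, and let ψ > 0. Suppose (z, λ1, λ2, ν) is a KKT point of the LP2 system with data (A, B, ψ, L) and Ŝ_L ⊆ {1,...,N} with |Ŝ_L| = L satisfies z(i) ≤ z(j) for all i ∈ Ŝ_L, j ∉ Ŝ_L. If there exists i ∈ S_d ∩ Ŝ_L with λ2(i) > 0, then ν = 0 and there exists a set S_z ⊆ {1,...,N}∖S_d with |S_z| = (N−K)−(L−1) such that Σ_{l=1}^{m_z} A_{lj}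 − ψ·Σ_{l=1}^{m_p} B_{lj} ≤ 0 for every j ∈ S_z. -/
/-- A KKT point of the linear program **LP2** with data `(A, B, ψ, L)`, where `A` is the
boolean matrix of negative-outcome rows and `B` the matrix of positive-outcome rows:
minimize `Σ_k (Σ_l A_{lk} − ψ Σ_l B_{lk}) z(k)` subject to `0 ≤ z(k) ≤ 1` for all `k`
and `Σ_k z(k) ≥ N−L`. -/
structure KKT2 (mz mp N L : ℕ) (A : Fin mz → Fin N → Bool) (B : Fin mp → Fin N → Bool)
    (ψ : ℝ) (z l1 l2 : Fin N → ℝ) (ν : ℝ) : Prop where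
  grad : ∀ k, (∑ l : Fin mz, (if A l k then (1 : ℝ) else 0))
      - ψ * (∑ l : Fin mp, (if B l k then (1 : ℝ) else 0)) - l1 k + l2 k - ν = 0
  cs1 : ∀ k, l1 k * z k = 0
  cs2 : ∀ k, l2 k * (z k - 1) = 0
  csnu : ν * ((∑ k : Fin N, z k) - ((N : ℝ) - L)) = 0
  z_nonneg : ∀ k, 0 ≤ z k
  z_le_one : ∀ k, z k ≤ 1
  sum_z : (N : ℝ) - L ≤ ∑ k : Fin N, z k
  l1_nonneg : ∀ k, 0 ≤ l1 k
  l2_nonneg : ∀ k, 0 ≤ l2 k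
  nu_nonneg : 0 ≤ ν

/-- deterministic error characterization for CoLpAl, case `λ2(i) > 0`:
at a KKT point of LP2, if the set `Ŝ_L` of `L` smallest entries of `z` contains a
defective item `i` with `λ2(i) > 0`, then `ν = 0` and there exist `(N−K)−(L−1)`
non-defective items `j` with `Σ_l A_{lj} − ψ Σ_l B_{lj} ≤ 0`. -/
theorem stmt_16 (N K L mz mp : ℕ) (hK1 : 1 ≤ K) (hKN : K < N)
    (hL1 : 1 ≤ L) (hL : L ≤ N - K)
    (Sd : Finset (Fin N)) (hSd : Sd.card = K)
    (A : Fin mz → Fin N → Bool) (B : Fin mp → Fin N → Bool)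
    (ψ : ℝ) (hψ : 0 < ψ)
    (z l1 l2 : Fin N → ℝ) (ν : ℝ)
    (hKKT : KKT2 mz mp N L A B ψ z l1 l2 ν)
    (SL : Finset (Fin N)) (hSL : SL.card = L)
    (hmin : ∀ i ∈ SL, ∀ j ∉ SL, z i ≤ z j)
    (hbad : ∃ i ∈ Sd ∩ SL, 0 < l2 i) :
    ν = 0 ∧
      ∃ Sz : Finset (Fin N), (∀ j ∈ Sz, j ∉ Sd) ∧ Sz.card = (N - K) - (L - 1) ∧
        ∀ j ∈ Sz, (∑ l : Fin mz, (if A l j then (1 : ℝ) else 0))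
          - ψ * (∑ l : Fin mp, (if B l j then (1 : ℝ) else 0)) ≤ 0 := by
  obtain ⟨i, hi, hl2i⟩ := hbad
  obtain ⟨hiSd, hiSL⟩ := Finset.mem_inter.mp hi
  have hLN : L ≤ N := by omega
  -- z i = 1
  have hzi : z i = 1 := by
    have := hKKT.cs2 i
    rcases mul_eq_zero.mp this with h | h
    · exact absurd h (ne_of_gt hl2i)
    · linarith
  -- every j outside SL has z j = 1
  have hcompl : ∀ j ∉ SL, z j = 1 := fun j hj =>
    le_antisymm (hKKT.z_le_one j) (hzi ▸ hmin i hiSL j hj)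
  -- sum bound
  have hsumc : ∑ k ∈ SLᶜ, z k = ((N : ℝ) - L) := by
    rw [Finset.sum_congr rfl (fun j hj => hcompl j (Finset.mem_compl.mp hj))]
    rw [Finset.sum_const, Finset.card_compl, Fintype.card_fin]
    rw [nsmul_eq_mul, mul_one, hSL, Nat.cast_sub hLN]
  have hsumSL : (1 : ℝ) ≤ ∑ k ∈ SL, z k := by
    have := Finset.single_le_sum (f := z) (fun k _ => hKKT.z_nonneg k) hiSL
    linarith
  have hsum : (N : ℝ) - L + 1 ≤ ∑ k : Fin N, z k := by
    rw [← Finset.sum_add_sum_compl SL z, hsumc]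
    linarith
  -- ν = 0
  have hnu : ν = 0 := by
    rcases mul_eq_zero.mp hKKT.csnu with h | h
    · exact h
    · linarith
  refine ⟨hnu, ?_⟩
  -- the cost is ≤ 0 wherever z j = 1
  have hcost : ∀ j, z j = 1 → (∑ l : Fin mz, (if A l j then (1 : ℝ) else 0))
      - ψ * (∑ l : Fin mp, (if B l j then (1 : ℝ) else 0)) ≤ 0 := by
    intro j hzj
    have hg := hKKT.grad j
    have hl1 : l1 j = 0 := by
      rcases mul_eq_zero.mp (hKKT.cs1 j) with h | h
      · exact h
      · rw [hzj] at h; norm_num at h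
    have := hKKT.l2_nonneg j
    rw [hl1, hnu] at hg
    linarith
  -- counting
  have hsub : SLᶜ ∩ Sd ⊆ Sd.erase i := by
    intro x hx
    obtain ⟨hx1, hx2⟩ := Finset.mem_inter.mp hx
    refine Finset.mem_erase.mpr ⟨?_, hx2⟩
    rintro rfl
    exact (Finset.mem_compl.mp hx1) hiSL
  have hcard1 : (SLᶜ ∩ Sd).card ≤ K - 1 := by
    have := Finset.card_le_card hsub
    rwa [Finset.card_erase_of_mem hiSd, hSd] at this
  have hcard2 : (SLᶜ ∩ Sd).card + (SLᶜ \ Sd).card = SLᶜ.card :=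
    Finset.card_inter_add_card_sdiff SLᶜ Sd
  have hcardc : SLᶜ.card = N - L := by
    rw [Finset.card_compl, Fintype.card_fin, hSL]
  have hbig : (N - K) - (L - 1) ≤ (SLᶜ \ Sd).card := by omega
  obtain ⟨Sz, hSzsub, hSzcard⟩ := Finset.exists_subset_card_eq hbig
  refine ⟨Sz, ?_, hSzcard, ?_⟩
  · intro j hj
    exact (Finset.mem_sdiff.mp (hSzsub hj)).2
  · intro j hj
    have hjc := (Finset.mem_sdiff.mp (hSzsub hj)).1
    exact hcost j (hcompl j (Finset.mem_compl.mp hjc))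
end

section
/- (Lemma: affine bound on H_b(α)/(1−α).) Let H_b denote the binary entropy function in nats, H_b(α) = −α·log α − (1−α)·log(1−α). For every α_h ∈ (0,1) there exists a constant c1 > 0 (depending only on α_h) such that for all α with 0 < α ≤ α_h, H_b(α)/(1−α) ≤ (17/6)·α + c1. In particular, for all α with 0 < α ≤ 1/2, H_b(α)/(1−α) ≤ (17/6)·α + 1/4. -/
/-- The binary entropy function in nats: `H_b(α) = −α log α − (1−α) log(1−α)`. -/
noncomputable def binEntropy (α : ℝ) : ℝ :=
  -α * Real.log α - (1 - α) * Real.log (1 - α)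

lemma neg_log_le_inv_sub_one {x : ℝ} (hx : 0 < x) : -Real.log x ≤ 1/x - 1 := by
  have := Real.log_le_sub_one_of_pos (show (0:ℝ) < x⁻¹ by positivity)
  rw [Real.log_inv] at this
  rw [one_div]
  linarith

lemma binEntropy_le_one {α : ℝ} (h0 : 0 < α) (h1 : α < 1) : binEntropy α ≤ 1 := by
  have h1' : 0 < 1 - α := by linarith
  have ha : -Real.log α ≤ 1/α - 1 := neg_log_le_inv_sub_one h0
  have hb : -Real.log (1-α) ≤ 1/(1-α) - 1 := neg_log_le_inv_sub_one h1'
  have ha' : -α * Real.log α ≤ 1 - α := by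
    have := mul_le_mul_of_nonneg_left ha h0.le
    have hinv : α * (1/α) = 1 := by field_simp
    nlinarith
  have hb' : -(1-α) * Real.log (1-α) ≤ α := by
    have := mul_le_mul_of_nonneg_left hb h1'.le
    have hinv : (1-α) * (1/(1-α)) = 1 := by field_simp
    nlinarith
  unfold binEntropy
  linarith

lemma poly_aux (u v : ℝ) (hu : 0 < u) (hv : 0 < v) (huv : u^3 + v^3 = 1) (hu2 : u^3 ≤ 1/2) :
    3*u^2 - 3*u^3 + 3*(1-v)*v^2 ≤ (17/6 * u^3 + 1/4) * v^3 := by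
  have hu1 : u < 1 := by nlinarith [pow_pos hv 3, sq_nonneg u, sq_nonneg (u-1), sq_nonneg (u+1)]
  have key : 3*v^2 ≤ 13/4 - 3*u^2 + 31/12*u^3 - 17/6*u^6 := by
    rcases le_or_gt (u^3) (1/4) with h | h
    · have am : 3*v^2*(24/25) ≤ 2*v^3 + (24/25)^3 := by
        nlinarith [sq_nonneg (v - 24/25), mul_nonneg (sq_nonneg (v - 24/25)) hv.le]
      nlinarith [sq_nonneg (u - 1/2), sq_nonneg u, mul_nonneg (sq_nonneg (u-1/2)) (sq_nonneg u),
        mul_nonneg (mul_nonneg hu.le hu.le) hu.le, sq_nonneg (u^3 - 1/8)]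
    · have am : 3*v^2*(43/50) ≤ 2*v^3 + (43/50)^3 := by
        nlinarith [sq_nonneg (v - 43/50), mul_nonneg (sq_nonneg (v - 43/50)) hv.le]
      nlinarith [sq_nonneg (u - 7/10), mul_nonneg (sq_nonneg (u-7/10)) (sq_nonneg u),
        mul_nonneg (mul_nonneg hu.le hu.le) hu.le, sq_nonneg (u^3 - 3/8)]
  nlinarith [key]

lemma cube_root_cube {x : ℝ} (hx : 0 ≤ x) : (x ^ ((1:ℝ)/3)) ^ 3 = x := by
  rw [← Real.rpow_natCast (x ^ ((1:ℝ)/3)) 3, ← Real.rpow_mul hx]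
  norm_num

/-- affine bound on `H_b(α)/(1−α)`: for every `α_h ∈ (0,1)` there is a
constant `c1 > 0` (depending only on `α_h`) with `H_b(α)/(1−α) ≤ (17/6)α + c1` for all
`0 < α ≤ α_h`; in particular `H_b(α)/(1−α) ≤ (17/6)α + 1/4` for all `0 < α ≤ 1/2`. -/
theorem stmt_18 :
    (∀ αh : ℝ, 0 < αh → αh < 1 → ∃ c1 : ℝ, 0 < c1 ∧
      ∀ α : ℝ, 0 < α → α ≤ αh →
        binEntropy α / (1 - α) ≤ 17 / 6 * α + c1) ∧
    (∀ α : ℝ, 0 < α → α ≤ 1 / 2 →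
      binEntropy α / (1 - α) ≤ 17 / 6 * α + 1 / 4) := by
  constructor
  · intro αh h0 h1
    have hd : (0:ℝ) < 1 - αh := by linarith
    refine ⟨1 / (1 - αh), by positivity, ?_⟩
    intro α ha hah
    have h1a : α < 1 := lt_of_le_of_lt hah h1
    have hden : 0 < 1 - α := by linarith
    have hent := binEntropy_le_one ha h1a
    have : binEntropy α / (1 - α) ≤ 1 / (1 - αh) :=
      div_le_div₀ (by norm_num) hent (by linarith) (by linarith)
    nlinarith
  · intro α ha hah
    have h1a : α < 1 := by linarith
    have hden : 0 < 1 - α := by linarith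
    set u := α ^ ((1:ℝ)/3) with hu_def
    set v := (1 - α) ^ ((1:ℝ)/3) with hv_def
    have hu : 0 < u := Real.rpow_pos_of_pos ha _
    have hv : 0 < v := Real.rpow_pos_of_pos hden _
    have hu3 : u ^ 3 = α := cube_root_cube ha.le
    have hv3 : v ^ 3 = 1 - α := cube_root_cube hden.le
    have hlogu : Real.log α = 3 * Real.log u := by
      rw [← hu3, Real.log_pow]; norm_num
    have hlogv : Real.log (1 - α) = 3 * Real.log v := by
      rw [← hv3, Real.log_pow]; norm_num
    have hbu : -Real.log u ≤ 1/u - 1 := neg_log_le_inv_sub_one hu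
    have hbv : -Real.log v ≤ 1/v - 1 := neg_log_le_inv_sub_one hv
    have hiu : u * (1/u) = 1 := by field_simp
    have hiv : v * (1/v) = 1 := by field_simp
    have h1' : -α * Real.log α ≤ 3*u^2 - 3*u^3 := by
      rw [hlogu, ← hu3]
      have := mul_le_mul_of_nonneg_left hbu (by positivity : (0:ℝ) ≤ 3 * u^3)
      nlinarith [pow_pos hu 3, sq_nonneg u]
    have h2' : -(1 - α) * Real.log (1 - α) ≤ 3*(1-v)*v^2 := by
      rw [hlogv, ← hv3]
      have := mul_le_mul_of_nonneg_left hbv (by positivity : (0:ℝ) ≤ 3 * v^3)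
      nlinarith [pow_pos hv 3, sq_nonneg v]
    have hsum : u^3 + v^3 = 1 := by rw [hu3, hv3]; ring
    have hu2 : u^3 ≤ 1/2 := by rw [hu3]; linarith
    have hmain := poly_aux u v hu hv hsum hu2
    have hent : binEntropy α ≤ (17/6 * α + 1/4) * (1 - α) := by
      unfold binEntropy
      calc -α * Real.log α - (1 - α) * Real.log (1 - α)
          ≤ 3*u^2 - 3*u^3 + 3*(1-v)*v^2 := by linarith
        _ ≤ (17/6 * u^3 + 1/4) * v^3 := hmain
        _ = (17/6 * α + 1/4) * (1 - α) := by rw [hu3, hv3]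
    rw [div_le_iff₀ hden]
    linarith [hent]
end
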